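/- arXiv:2306.00145 — 4 statements merged into one kernel-verified Lean document; each statement's English description precedes it below -/
import Mathlib

section
/- For every L ≥ 0, every design (n_0, n_1, …, n_L) of positive integers, and every positive integer m, the maximal number of linear regions of a function computed by a ReLU network of design (n_0, …, n_L, m) equals the maximal number of linear regions of a function computed by a ReLU network of design (n_0, …, n_L, 1); that is, R(n_0, …, n_L, m) = R(n_0, …, n_L, 1). -/
open scoped BigOperators
open MeasureTheory

noncomputable section

/-- The ReLU activation function. -/
def relu (x : ℝ) : ℝ := max x 0

/-- `f : ℝ^n → ℝ^m` is an affine map. -/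
def IsAffineMap {n m : ℕ} (f : (Fin n → ℝ) → Fin m → ℝ) : Prop :=
  ∃ (A : Matrix (Fin m) (Fin n) ℝ) (b : Fin m → ℝ),
    ∀ x i, f x i = (∑ j, A i j * x j) + b i

/-- `f : ℝ^n → ℝ^m` is an affine map all of whose coefficients have absolute value ≤ c. -/
def IsAffineMapB (c : ℝ) {n m : ℕ} (f : (Fin n → ℝ) → Fin m → ℝ) : Prop :=
  ∃ (A : Matrix (Fin m) (Fin n) ℝ) (b : Fin m → ℝ),
    (∀ i j, |A i j| ≤ c) ∧ (∀ i, |b i| ≤ c) ∧ ∀ x i, f x i = (∑ j, A i j * x j) + b i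

/-- `ComputesA ρ n hidden m f` : `f` is computed by a feedforward network with activation
function `ρ`, input dimension `n`, hidden layer widths `hidden` and output dimension `m`. -/
inductive ComputesA (ρ : ℝ → ℝ) :
    ∀ (n : ℕ), List ℕ → ∀ (m : ℕ), ((Fin n → ℝ) → Fin m → ℝ) → Prop
  | nil {n m : ℕ} (f : (Fin n → ℝ) → Fin m → ℝ) (hf : IsAffineMap f) :
      ComputesA ρ n [] m f
  | cons {n w m : ℕ} {ws : List ℕ} (f₀ : (Fin n → ℝ) → Fin w → ℝ)
      (g : (Fin w → ℝ) → Fin m → ℝ) (hf : IsAffineMap f₀)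
      (hg : ComputesA ρ w ws m g) :
      ComputesA ρ n (w :: ws) m (fun x => g (fun i => ρ (f₀ x i)))

/-- Same as `ComputesA` but all coefficients of all affine maps are bounded by `c`. -/
inductive ComputesAB (ρ : ℝ → ℝ) (c : ℝ) :
    ∀ (n : ℕ), List ℕ → ∀ (m : ℕ), ((Fin n → ℝ) → Fin m → ℝ) → Prop
  | nil {n m : ℕ} (f : (Fin n → ℝ) → Fin m → ℝ) (hf : IsAffineMapB c f) :
      ComputesAB ρ c n [] m f
  | cons {n w m : ℕ} {ws : List ℕ} (f₀ : (Fin n → ℝ) → Fin w → ℝ)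
      (g : (Fin w → ℝ) → Fin m → ℝ) (hf : IsAffineMapB c f₀)
      (hg : ComputesAB ρ c w ws m g) :
      ComputesAB ρ c n (w :: ws) m (fun x => g (fun i => ρ (f₀ x i)))

/-- `f` is computed by a ReLU network of design `(n, hidden…, m)`. -/
def Computes (n : ℕ) (hidden : List ℕ) (m : ℕ) (f : (Fin n → ℝ) → Fin m → ℝ) : Prop :=
  ComputesA relu n hidden m f

/-- `R` is a linear region of `f` : an open connected set on which `f` is affine,
maximal in the sense that `f` is not affine on any strictly larger open set. -/
def IsLinearRegion {n m : ℕ} (f : (Fin n → ℝ) → Fin m → ℝ) (R : Set (Fin n → ℝ)) : Prop :=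
  IsOpen R ∧ IsConnected R ∧ (∃ g, IsAffineMap g ∧ Set.EqOn f g R) ∧
    ∀ R' : Set (Fin n → ℝ), IsOpen R' → R ⊂ R' →
      ¬ ∃ g, IsAffineMap g ∧ Set.EqOn f g R'

/-- The number of linear regions of `f`. -/
def numRegions {n m : ℕ} (f : (Fin n → ℝ) → Fin m → ℝ) : ℕ :=
  {R | IsLinearRegion f R}.ncard

/-- `R(n, hidden…, m)` : the maximal number of linear regions of a function computed by a
ReLU network of design `(n, hidden…, m)`. -/
def maxRegions (n : ℕ) (hidden : List ℕ) (m : ℕ) : ℕ :=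
  sSup {k | ∃ f : (Fin n → ℝ) → Fin m → ℝ, Computes n hidden m f ∧ numRegions f = k}

/-- `f` is piecewise affine: continuous, finitely many linear regions, whose closures cover. -/
def IsPiecewiseAffine {n m : ℕ} (f : (Fin n → ℝ) → Fin m → ℝ) : Prop :=
  Continuous f ∧ {R | IsLinearRegion f R}.Finite ∧
    (⋃ R ∈ {R | IsLinearRegion f R}, closure R) = Set.univ

/-!
Post-composing a network with an affine map `E` gives a network of the same hidden design, with
the same linear regions as soon as affinity of `E ∘ f` on an open set forces affinity of `f`.
For `1 → m` outputs take a coordinate embedding: it has an affine left inverse. For `m → 1` take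
a generic functional `y ↦ lam ⬝ᵥ y`. At every point, a network with a continuous, finitely
piecewise affine activation agrees with one of finitely many affine maps (one for each
activation pattern), and `lam` is chosen so that `ψ ↦ lam ⬝ᵥ ψ` is injective on them. If
`lam ⬝ᵥ f` equals an affine `G` on an open `U`, then off a nowhere dense set the only candidate
compatible with `G` is the unique `ψ` with `lam ⬝ᵥ ψ = G`; so `f = ψ` on a dense part of `U`,
hence on `U` by continuity.
-/

namespace IsAffineMap

variable {n m p : ℕ}

theorem iff_exists_affineMap {f : (Fin n → ℝ) → Fin m → ℝ} :
    IsAffineMap f ↔ ∃ φ : (Fin n → ℝ) →ᵃ[ℝ] (Fin m → ℝ), ⇑φ = f := by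
  constructor
  · rintro ⟨A, b, hf⟩
    refine ⟨(Matrix.toLin' A).toAffineMap + AffineMap.const ℝ _ b, ?_⟩
    ext x i
    simp [hf, Matrix.mulVec, dotProduct]
  · rintro ⟨φ, rfl⟩
    refine ⟨LinearMap.toMatrix' φ.linear, φ 0, fun x i => ?_⟩
    change φ x i = (LinearMap.toMatrix' φ.linear).mulVec x i + φ 0 i
    rw [LinearMap.toMatrix'_mulVec]
    exact congrFun (congrFun φ.decomp x) i

theorem comp {f : (Fin n → ℝ) → Fin m → ℝ} {g : (Fin m → ℝ) → Fin p → ℝ}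
    (hg : IsAffineMap g) (hf : IsAffineMap f) : IsAffineMap (fun x => g (f x)) := by
  obtain ⟨φ, rfl⟩ := iff_exists_affineMap.mp hf
  obtain ⟨γ, rfl⟩ := iff_exists_affineMap.mp hg
  exact iff_exists_affineMap.mpr ⟨γ.comp φ, rfl⟩

theorem continuous {f : (Fin n → ℝ) → Fin m → ℝ} (hf : IsAffineMap f) : Continuous f := by
  obtain ⟨φ, rfl⟩ := iff_exists_affineMap.mp hf
  exact φ.continuous_of_finiteDimensional

theorem eq_of_eqOn {f g : (Fin n → ℝ) → Fin m → ℝ} (hf : IsAffineMap f) (hg : IsAffineMap g)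
    {U : Set (Fin n → ℝ)} (hU : IsOpen U) (hne : U.Nonempty) (h : Set.EqOn f g U) : f = g := by
  obtain ⟨φ, rfl⟩ := iff_exists_affineMap.mp hf
  obtain ⟨γ, rfl⟩ := iff_exists_affineMap.mp hg
  rw [AffineMap.ext_on (hU.affineSpan_eq_top hne) h]

theorem dense_setOf_ne {f g : (Fin n → ℝ) → Fin m → ℝ} (hf : IsAffineMap f)
    (hg : IsAffineMap g) (hfg : f ≠ g) : Dense {x | f x ≠ g x} := by
  refine dense_iff_inter_open.mpr fun U hU hne => ?_
  by_contra hempty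
  refine hfg (eq_of_eqOn hf hg hU hne fun x hx => ?_)
  by_contra hx'
  exact hempty ⟨x, hx, hx'⟩

end IsAffineMap

theorem exists_forall_dotProduct_ne_zero {k ι : Type*} [Field k] [Infinite k] [Fintype ι]
    {S : Set (ι → k)} (hS : S.Finite) (h0 : 0 ∉ S) : ∃ lam : ι → k, ∀ v ∈ S, lam ⬝ᵥ v ≠ 0 := by
  classical
  by_contra! hcover
  have : Finite S := hS
  obtain ⟨⟨v, hv⟩, htop⟩ := Subspace.exists_eq_top_of_iUnion_eq_univ
    (p := fun v : S => LinearMap.ker (dotProductBilin k k (v : ι → k)))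
    (Set.eq_univ_of_forall fun lam => by
      obtain ⟨v, hv, hzero⟩ := hcover lam
      exact Set.mem_iUnion.mpr ⟨⟨v, hv⟩, by simpa [dotProduct_comm] using hzero⟩)
  have hv0 : v = 0 := funext fun i => by
    have := LinearMap.mem_ker.mp (htop ▸ Submodule.mem_top : Pi.single i (1 : k) ∈ _)
    simpa using this
  exact h0 (hv0 ▸ hv)

theorem isAffineMap_dotProduct {m : ℕ} (lam : Fin m → ℝ) :
    IsAffineMap (fun (y : Fin m → ℝ) (_ : Fin 1) => lam ⬝ᵥ y) :=
  ⟨Matrix.of fun _ => lam, 0, fun _ _ => by simp [dotProduct]⟩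

theorem isAffineMap_diagonal {w : ℕ} (a b : Fin w → ℝ) :
    IsAffineMap (fun (y : Fin w → ℝ) i => a i * y i + b i) := by
  classical
  exact ⟨Matrix.diagonal a, b, fun y i => by simp [Matrix.diagonal_apply]⟩

def IsAffineOn {n m : ℕ} (f : (Fin n → ℝ) → Fin m → ℝ) (U : Set (Fin n → ℝ)) : Prop :=
  ∃ g, IsAffineMap g ∧ Set.EqOn f g U

section IsAffineOn

variable {n m p : ℕ} {f : (Fin n → ℝ) → Fin m → ℝ} {U : Set (Fin n → ℝ)}

theorem IsAffineOn.comp {E : (Fin m → ℝ) → Fin p → ℝ} (hE : IsAffineMap E) (hf : IsAffineOn f U) :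
    IsAffineOn (fun x => E (f x)) U := by
  obtain ⟨g, hg, hfg⟩ := hf
  exact ⟨fun x => E (g x), hE.comp hg, fun x hx => congrArg E (hfg hx)⟩

theorem isAffineOn_comp_iff_of_leftInverse {E : (Fin m → ℝ) → Fin p → ℝ}
    {P : (Fin p → ℝ) → Fin m → ℝ} (hE : IsAffineMap E) (hP : IsAffineMap P)
    (hPE : Function.LeftInverse P E) : IsAffineOn (fun x => E (f x)) U ↔ IsAffineOn f U :=
  ⟨fun h => by simpa only [hPE _] using h.comp hP, IsAffineOn.comp hE⟩

theorem numRegions_eq_of_isAffineOn_iff {g : (Fin n → ℝ) → Fin p → ℝ}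
    (h : ∀ U, IsOpen U → (IsAffineOn f U ↔ IsAffineOn g U)) : numRegions f = numRegions g := by
  unfold numRegions
  congr 1
  ext R
  exact and_congr_right fun hR => and_congr_right fun _ => and_congr (h R hR)
    (forall₂_congr fun R' hR' => imp_congr_right fun _ => not_congr (h R' hR'))

end IsAffineOn

def HasFiniteAffinePieces (ρ : ℝ → ℝ) : Prop :=
  ∃ P : Set (ℝ × ℝ), P.Finite ∧ ∀ t, ∃ q ∈ P, ρ t = q.1 * t + q.2

theorem continuous_relu : Continuous relu := continuous_id.max continuous_const

theorem hasFiniteAffinePieces_relu : HasFiniteAffinePieces relu := by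
  refine ⟨{(1, 0), (0, 0)}, by simp, fun t => ?_⟩
  rcases le_total 0 t with ht | ht
  · exact ⟨(1, 0), by simp [relu, ht]⟩
  · exact ⟨(0, 0), by simp [relu, ht]⟩

namespace ComputesA

variable {ρ : ℝ → ℝ} {n m : ℕ} {ws : List ℕ} {f : (Fin n → ℝ) → Fin m → ℝ}

theorem comp_isAffineMap {p : ℕ} {E : (Fin m → ℝ) → Fin p → ℝ} (hf : ComputesA ρ n ws m f)
    (hE : IsAffineMap E) : ComputesA ρ n ws p (fun x => E (f x)) := by
  induction hf with
  | nil f hf => exact .nil _ (hE.comp hf)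
  | cons f₀ g hf₀ _ ih => exact .cons f₀ (fun y => E (g y)) hf₀ (ih hE)

theorem continuous (hρ : Continuous ρ) (hf : ComputesA ρ n ws m f) : Continuous f := by
  induction hf with
  | nil f hf => exact hf.continuous
  | cons f₀ g hf₀ _ ih =>
    exact ih.comp (continuous_pi fun i => hρ.comp ((continuous_apply i).comp hf₀.continuous))

theorem exists_affine_selection (hρ : HasFiniteAffinePieces ρ) (hf : ComputesA ρ n ws m f) :
    ∃ 𝒜 : Set ((Fin n → ℝ) → Fin m → ℝ), 𝒜.Finite ∧ (∀ ψ ∈ 𝒜, IsAffineMap ψ) ∧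
      ∀ x, ∃ ψ ∈ 𝒜, f x = ψ x := by
  obtain ⟨P, hP, hρP⟩ := hρ
  induction hf with
  | nil f hf => exact ⟨{f}, Set.finite_singleton f, by simpa using hf, fun x => ⟨f, rfl, rfl⟩⟩
  | @cons n w m ws f₀ g hf₀ _ ih =>
    obtain ⟨𝒜, h𝒜, haff, hsel⟩ := ih
    let candidate (ψ : (Fin w → ℝ) → Fin m → ℝ) (q : Fin w → ℝ × ℝ) (x : Fin n → ℝ) :=
      ψ (fun i => (q i).1 * f₀ x i + (q i).2)
    refine ⟨(fun p => candidate p.1 p.2) '' (𝒜 ×ˢ Set.univ.pi fun _ => P),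
      (h𝒜.prod (Set.Finite.pi fun _ => hP)).image _, ?_, fun x => ?_⟩
    · rintro _ ⟨⟨ψ, q⟩, ⟨hψ, -⟩, rfl⟩
      exact (haff ψ hψ).comp ((isAffineMap_diagonal _ _).comp hf₀)
    · choose q hqP hq using fun i => hρP (f₀ x i)
      obtain ⟨ψ, hψ, hgψ⟩ := hsel (fun i => ρ (f₀ x i))
      refine ⟨candidate ψ q, ⟨(ψ, q), ⟨hψ, fun i _ => hqP i⟩, rfl⟩, ?_⟩
      change g _ = _
      rw [hgψ]
      simp only [candidate, hq]

end ComputesA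

theorem exists_injOn_comp_dotProduct {X : Type*} {m : ℕ} {𝒜 : Set (X → Fin m → ℝ)}
    (h𝒜 : 𝒜.Finite) : ∃ lam : Fin m → ℝ, Set.InjOn (fun ψ x => lam ⬝ᵥ ψ x) 𝒜 := by
  let pairs := {p : (X → Fin m → ℝ) × (X → Fin m → ℝ) | p ∈ 𝒜 ×ˢ 𝒜 ∧ p.1 ≠ p.2}
  have : Finite pairs := ((h𝒜.prod h𝒜).subset fun _ hp => hp.1).to_subtype
  choose x hx using fun p : pairs => Function.ne_iff.mp p.2.2
  obtain ⟨lam, hlam⟩ := exists_forall_dotProduct_ne_zero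
    (Set.finite_range fun p : pairs => p.1.1 (x p) - p.1.2 (x p))
    (by rintro ⟨p, hzero⟩; exact hx p (sub_eq_zero.mp hzero))
  refine ⟨lam, fun ψ₁ h₁ ψ₂ h₂ heq => ?_⟩
  by_contra hne
  refine hlam _ ⟨⟨(ψ₁, ψ₂), ⟨h₁, h₂⟩, hne⟩, rfl⟩ ?_
  rw [dotProduct_sub, sub_eq_zero]
  exact congrFun heq _

section Separation

variable {n m : ℕ} {f : (Fin n → ℝ) → Fin m → ℝ} {𝒜 : Set ((Fin n → ℝ) → Fin m → ℝ)}
  {lam : Fin m → ℝ}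

theorem isAffineOn_of_isAffineOn_dotProduct (hf : Continuous f) (h𝒜 : 𝒜.Finite)
    (haff : ∀ ψ ∈ 𝒜, IsAffineMap ψ) (hsel : ∀ x, ∃ ψ ∈ 𝒜, f x = ψ x)
    (hlam : Set.InjOn (fun ψ x => lam ⬝ᵥ ψ x) 𝒜) {U : Set (Fin n → ℝ)} (hU : IsOpen U)
    (h : IsAffineOn (fun x (_ : Fin 1) => lam ⬝ᵥ f x) U) : IsAffineOn f U := by
  obtain ⟨G, hG, hfG⟩ := h
  rcases U.eq_empty_or_nonempty with rfl | hne
  · exact ⟨0, ⟨0, 0, by simp⟩, Set.eqOn_empty _ _⟩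
  let bad := {ψ ∈ 𝒜 | (fun x (_ : Fin 1) => lam ⬝ᵥ ψ x) ≠ G}
  let D := ⋂ ψ ∈ bad, {x | (fun _ : Fin 1 => lam ⬝ᵥ ψ x) ≠ G x}
  have hD : Dense D := dense_biInter_of_isOpen
    (fun ψ hψ => isOpen_ne_fun ((isAffineMap_dotProduct lam).comp (haff ψ hψ.1)).continuous
      hG.continuous) (h𝒜.subset fun _ hψ => hψ.1).countable
    fun ψ hψ => ((isAffineMap_dotProduct lam).comp (haff ψ hψ.1)).dense_setOf_ne hG hψ.2
  have hgood : ∀ x ∈ U ∩ D, ∀ ψ ∈ 𝒜, f x = ψ x → (fun x (_ : Fin 1) => lam ⬝ᵥ ψ x) = G := by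
    intro x ⟨hxU, hxD⟩ ψ hψ hfψ
    by_contra hbad
    exact Set.mem_iInter₂.mp hxD ψ ⟨hψ, hbad⟩ (by simpa only [hfψ] using hfG hxU)
  obtain ⟨x₀, hx₀⟩ := hD.inter_open_nonempty U hU hne
  obtain ⟨ψ₀, hψ₀, hfψ₀⟩ := hsel x₀
  have hEq : Set.EqOn f ψ₀ (U ∩ D) := fun x hx => by
    obtain ⟨ψ, hψ, hfψ⟩ := hsel x
    have hGψ := (hgood x hx ψ hψ hfψ).trans (hgood x₀ hx₀ ψ₀ hψ₀ hfψ₀).symm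
    rwa [hlam hψ hψ₀ (funext fun y => congrFun (congrFun hGψ y) 0)] at hfψ
  refine ⟨ψ₀, haff ψ₀ hψ₀, fun x hx => ?_⟩
  exact (hEq.closure hf (haff ψ₀ hψ₀).continuous) (hD.open_subset_closure_inter hU hx)

end Separation

namespace ComputesA

variable {ρ : ℝ → ℝ} {n m : ℕ} {ws : List ℕ}

theorem exists_single_output_numRegions_eq (hρc : Continuous ρ) (hρ : HasFiniteAffinePieces ρ)
    {f : (Fin n → ℝ) → Fin m → ℝ} (hf : ComputesA ρ n ws m f) :
    ∃ g : (Fin n → ℝ) → Fin 1 → ℝ, ComputesA ρ n ws 1 g ∧ numRegions g = numRegions f := by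
  obtain ⟨𝒜, h𝒜, haff, hsel⟩ := hf.exists_affine_selection hρ
  obtain ⟨lam, hlam⟩ := exists_injOn_comp_dotProduct h𝒜
  refine ⟨_, hf.comp_isAffineMap (isAffineMap_dotProduct lam),
    numRegions_eq_of_isAffineOn_iff fun U hU => ⟨?_, IsAffineOn.comp (isAffineMap_dotProduct lam)⟩⟩
  exact isAffineOn_of_isAffineOn_dotProduct (hf.continuous hρc) h𝒜 haff hsel hlam hU

theorem exists_numRegions_eq_of_single_output (hm : 0 < m) {g : (Fin n → ℝ) → Fin 1 → ℝ}
    (hg : ComputesA ρ n ws 1 g) :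
    ∃ f : (Fin n → ℝ) → Fin m → ℝ, ComputesA ρ n ws m f ∧ numRegions f = numRegions g := by
  classical
  let i₀ : Fin m := ⟨0, hm⟩
  have hE : IsAffineMap fun (y : Fin 1 → ℝ) => Pi.single i₀ (y 0) :=
    ⟨Matrix.of fun i _ => if i = i₀ then 1 else 0, 0, fun y i => by simp [Pi.single_apply]⟩
  have hP : IsAffineMap fun (y : Fin m → ℝ) (_ : Fin 1) => y i₀ :=
    ⟨Matrix.of fun _ => Pi.single i₀ 1, 0, fun y _ => by simp [Pi.single_apply]⟩
  refine ⟨_, hg.comp_isAffineMap hE, numRegions_eq_of_isAffineOn_iff fun U _ =>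
    isAffineOn_comp_iff_of_leftInverse hE hP fun y => ?_⟩
  funext j
  simp [Subsingleton.elim j 0]

end ComputesA

theorem stmt_0_general (n₀ : ℕ) (hidden : List ℕ) (m : ℕ) (hm : 0 < m) :
    maxRegions n₀ hidden m = maxRegions n₀ hidden 1 := by
  unfold maxRegions
  congr 1
  ext k
  constructor
  · rintro ⟨f, hf, rfl⟩
    exact ComputesA.exists_single_output_numRegions_eq continuous_relu hasFiniteAffinePieces_relu hf
  · rintro ⟨g, hg, rfl⟩
    exact ComputesA.exists_numRegions_eq_of_single_output hm hg

/-- `R(n₀, …, n_L, m) = R(n₀, …, n_L, 1)`. -/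
theorem stmt_0 (n₀ : ℕ) (hidden : List ℕ) (m : ℕ)
    (h₀ : 0 < n₀) (hh : ∀ w ∈ hidden, 0 < w) (hm : 0 < m) :
    maxRegions n₀ hidden m = maxRegions n₀ hidden 1 :=
  stmt_0_general n₀ hidden m hm
end
end

section
/- Let h_1, …, h_n : ℝ^d → ℝ be affine functions and consider the connected components (called regions) of the set ℝ^d \ ∪_{i=1}^n {x : h_i(x) = 0}. For a region R, its activation set is {i : h_i(x) > 0 for all x ∈ R}. Then for every 0 ≤ m ≤ n, the number of regions whose activation set has size at least n − m is at most Σ_{j=0}^{m} f_{j,d}(n). In particular f_{j,d}(n) = 0 for j > (n + min{d,n})/2. -/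
open scoped BigOperators
open MeasureTheory

noncomputable section

/-- `f : ℝ^d → ℝ` is an affine function. -/
def IsAffineFun {d : ℕ} (f : (Fin d → ℝ) → ℝ) : Prop :=
  ∃ (a : Fin d → ℝ) (b : ℝ), ∀ x, f x = (∑ i, a i * x i) + b

/-- Binomial coefficient with integer arguments; equal to `0` if either argument is
negative (or if the top is smaller than the bottom). -/
def zchoose (a b : ℤ) : ℕ :=
  if 0 ≤ a ∧ 0 ≤ b then a.toNat.choose b.toNat else 0

/-- The function `f_{j,d}(n)` : `C(n,j)` for `j < d`, and
`C(n-2j+2d-1, d-1) + C(n-2j+2d-2, d-1)` for `j ≥ d`. -/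
def fjd (j : ℕ) (d : ℤ) (nn : ℕ) : ℕ :=
  if (j : ℤ) < d then nn.choose j
  else zchoose ((nn : ℤ) - 2 * j + 2 * d - 1) (d - 1) +
       zchoose ((nn : ℤ) - 2 * j + 2 * d - 2) (d - 1)

/-- `dval n₀ nh j l = min {n₀, nh 0 - j 0, …, nh (l-1) - j (l-1)}`, i.e. the quantity
`d_l` associated with input dimension `n₀`, hidden widths `nh` and a tuple `j`. -/
def dval (n₀ : ℕ) {L : ℕ} (nh : Fin L → ℕ) (j : Fin L → ℕ) (l : Fin L) : ℤ :=
  (Finset.Iio l).fold min (n₀ : ℤ) (fun i => (nh i : ℤ) - (j i : ℤ))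

/-!
Two points off the hyperplanes lie in the same region iff every `h i` has the same sign at both:
the segment between them then avoids the hyperplanes, and a sign change would force a zero inside
a connected region. So it suffices to count the realizable sets `s` of negative indices
with `|s| ≤ m`. For `d = 1`, moving along the line shrinks `s` on the increasing `h i` and grows
it on the decreasing ones, leaving at most `min (2m) n + 1` possibilities. For `d ≥ 2`, deleting one
hyperplane `h a = 0` identifies `s` with `s ∪ {a}`; when both are realized, the segment joining
them meets the hyperplane in a point realizing `s` in the `(d-1)`-dimensional arrangement
restricted to it, with `|s| ≤ m - 1`. Hence the count obeys
`B(n+1, d, m) ≤ B(n, d, m) + B(n, d-1, m-1)`, which `∑_{j ≤ m} f_{j,d}(n)` satisfies with equality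
by Pascal's rule.
-/

lemma IsAffineFun.exists_affineMap {d : ℕ} {f : (Fin d → ℝ) → ℝ} (hf : IsAffineFun f) :
    ∃ g : (Fin d → ℝ) →ᵃ[ℝ] ℝ, ⇑g = f := by
  obtain ⟨a, b, hab⟩ := hf
  refine ⟨(Fintype.linearCombination ℝ a).toAffineMap + AffineMap.const ℝ _ b, funext fun x => ?_⟩
  simp [hab, Fintype.linearCombination_apply, mul_comm]

namespace HyperplaneArrangement

open Finset

lemma zchoose_eq_zero_of_lt {a b : ℤ} (hab : a < b) : zchoose a b = 0 := by
  unfold zchoose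
  split_ifs
  · exact Nat.choose_eq_zero_of_lt (by omega)
  · rfl

lemma fjd_eq_zero {d n j : ℕ} (hj : (n : ℤ) + min (d : ℤ) n < 2 * j) : fjd j d n = 0 := by
  unfold fjd
  split_ifs
  · exact Nat.choose_eq_zero_of_lt (by omega)
  · rw [zchoose_eq_zero_of_lt (by omega), zchoose_eq_zero_of_lt (by omega)]

lemma fjd_zero {d : ℕ} (hd : 1 ≤ d) (n : ℕ) : fjd 0 d n = 1 := by
  rw [fjd, if_pos (by omega), Nat.choose_zero_right]

lemma zchoose_succ_succ (a : ℤ) {b : ℤ} (hb : 0 ≤ b) :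
    zchoose (a + 1) (b + 1) = zchoose a (b + 1) + zchoose a b := by
  obtain ⟨b, rfl⟩ := Int.eq_ofNat_of_zero_le hb
  rcases lt_trichotomy a (-1) with ha | rfl | ha
  · simp [zchoose, show ¬ 0 ≤ a + 1 by omega, show ¬ 0 ≤ a by omega]
  · simp [zchoose]
  · obtain ⟨a, rfl⟩ := Int.eq_ofNat_of_zero_le (show 0 ≤ a by omega)
    simp only [zchoose, show ((a : ℤ) + 1).toNat = a + 1 by omega,
      show ((b : ℤ) + 1).toNat = b + 1 by omega, Int.toNat_natCast, Nat.choose_succ_succ']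
    simp [show (0 : ℤ) ≤ a + 1 by omega, show (0 : ℤ) ≤ b + 1 by omega, add_comm]

lemma fjd_succ_succ {d : ℕ} (hd : 1 ≤ d) (j n : ℕ) :
    fjd (j + 1) (d + 1 : ℕ) (n + 1) = fjd (j + 1) (d + 1 : ℕ) n + fjd j d n := by
  unfold fjd
  by_cases hj : j < d
  · simp only [show ((j + 1 : ℕ) : ℤ) < (d + 1 : ℕ) by omega, show ((j : ℕ) : ℤ) < d by omega,
      if_true, Nat.choose_succ_succ', add_comm]
  · simp only [show ¬ ((j + 1 : ℕ) : ℤ) < (d + 1 : ℕ) by omega, show ¬ ((j : ℕ) : ℤ) < d by omega,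
      if_false]
    have h₁ := zchoose_succ_succ ((n : ℤ) - 2 * j + 2 * d - 1) (b := d - 1) (by omega)
    have h₂ := zchoose_succ_succ ((n : ℤ) - 2 * j + 2 * d - 2) (b := d - 1) (by omega)
    push_cast at h₁ h₂ ⊢
    ring_nf at h₁ h₂ ⊢
    omega

def regionBound (n d m : ℕ) : ℕ := ∑ j ∈ range (m + 1), fjd j d n

lemma one_le_regionBound {d : ℕ} (hd : 1 ≤ d) (n m : ℕ) : 1 ≤ regionBound n d m := by
  rw [regionBound, sum_range_succ']
  simp [fjd_zero hd]

lemma regionBound_succ_succ {d : ℕ} (hd : 1 ≤ d) (n m : ℕ) :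
    regionBound (n + 1) (d + 1) (m + 1) = regionBound n (d + 1) (m + 1) + regionBound n d m := by
  simp only [regionBound, sum_range_succ' _ (m + 1), fjd_succ_succ hd, sum_add_distrib,
    fjd_zero (by omega : 1 ≤ d + 1)]
  ring

lemma regionBound_one (n m : ℕ) : regionBound n 1 m = min (2 * m) n + 1 := by
  induction m with
  | zero => simp [regionBound, fjd]
  | succ m ih =>
    rw [regionBound, sum_range_succ, ← regionBound, ih]
    simp only [fjd, zchoose, Nat.cast_one, sub_self, Int.toNat_zero, Nat.choose_zero_right]
    split_ifs <;> omega

lemma ncard_eq_ncard_image_erase_add {α : Type*} [DecidableEq α] {T : Set (Finset α)}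
    (hT : T.Finite) (a : α) :
    T.ncard = ((·.erase a) '' T).ncard + {s | s ∈ T ∧ a ∉ s ∧ insert a s ∈ T}.ncard := by
  set T₀ := {s | s ∈ T ∧ a ∉ s}
  set T₁ := {s | s ∈ T ∧ a ∈ s}
  have hsplit : T.ncard = T₀.ncard + T₁.ncard := by
    rw [← Set.ncard_union_eq (Set.disjoint_left.2 fun s h₀ h₁ => h₀.2 h₁.2)
      (hT.subset fun _ h => h.1) (hT.subset fun _ h => h.1)]
    congr 1
    ext s
    by_cases hs : a ∈ s <;> simp [T₀, T₁, hs]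
  have himage : (·.erase a) '' T = T₀ ∪ (·.erase a) '' T₁ := by
    ext s
    constructor
    · rintro ⟨t, ht, rfl⟩
      by_cases hat : a ∈ t
      · exact Or.inr ⟨t, ⟨ht, hat⟩, rfl⟩
      · exact Or.inl ⟨show t.erase a ∈ T by rwa [erase_eq_of_notMem hat], notMem_erase a t⟩
    · rintro (⟨hs, has⟩ | ⟨t, ht, rfl⟩)
      · exact ⟨s, hs, erase_eq_of_notMem has⟩
      · exact ⟨t, ht.1, rfl⟩
  have hinter : T₀ ∩ (·.erase a) '' T₁ = {s | s ∈ T ∧ a ∉ s ∧ insert a s ∈ T} := by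
    ext s
    constructor
    · rintro ⟨⟨hs, has⟩, t, ⟨ht, hat⟩, rfl⟩
      exact ⟨hs, has, by rwa [insert_erase hat]⟩
    · rintro ⟨hs, has, hins⟩
      exact ⟨⟨hs, has⟩, insert a s, ⟨hins, mem_insert_self a s⟩, erase_insert has⟩
  have hinj : ((·.erase a) '' T₁).ncard = T₁.ncard :=
    ((erase_injOn' a).mono fun _ h => h.2).ncard_image
  have := Set.ncard_union_add_ncard_inter T₀ ((·.erase a) '' T₁)
    (hT.subset fun _ h => h.1) ((hT.subset fun _ h => h.1).image _)
  rw [← himage, hinter, hinj] at this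
  omega

section Patterns

variable {ι X : Type*}

/-- Off the hyperplanes, the complement in `I` of the activation set of the region of `x`. -/
def inactiveSet (I : Finset ι) (h : ι → X → ℝ) (x : X) : Finset ι :=
  I.filter fun i => h i x < 0

def inactiveSets (I : Finset ι) (h : ι → X → ℝ) (m : ℕ) : Set (Finset ι) :=
  {s | ∃ x, (∀ i ∈ I, h i x ≠ 0) ∧ inactiveSet I h x = s ∧ s.card ≤ m}

lemma inactiveSets_finite (I : Finset ι) (h : ι → X → ℝ) (m : ℕ) :
    (inactiveSets I h m).Finite :=
  I.powerset.finite_toSet.subset fun _ ⟨_, _, hs, _⟩ => mem_powerset.2 (hs ▸ filter_subset _ _)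

lemma ncard_inactiveSets_le_one {I : Finset ι} {m : ℕ} (hIm : I = ∅ ∨ m = 0) (h : ι → X → ℝ) :
    (inactiveSets I h m).ncard ≤ 1 := by
  refine (Set.ncard_le_ncard (t := {∅}) ?_ (Set.finite_singleton _)).trans_eq
    (Set.ncard_singleton _)
  rintro _ ⟨x, -, rfl, hcard⟩
  rcases hIm with rfl | rfl
  · simp [inactiveSet]
  · simpa using hcard

lemma inactiveSets_comp_of_surjective {Y : Type*} {e : Y → X} (he : Function.Surjective e)
    (I : Finset ι) (h : ι → X → ℝ) (m : ℕ) :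
    inactiveSets I (fun i => h i ∘ e) m = inactiveSets I h m := by
  ext s
  constructor
  · rintro ⟨y, hy⟩
    exact ⟨e y, hy⟩
  · rintro ⟨x, hx⟩
    obtain ⟨y, rfl⟩ := he x
    exact ⟨y, hx⟩

lemma erase_inactiveSet_insert [DecidableEq ι] {I : Finset ι} {a : ι} (ha : a ∉ I)
    (h : ι → X → ℝ) (x : X) : (inactiveSet (insert a I) h x).erase a = inactiveSet I h x := by
  simp only [inactiveSet, filter_insert]
  split_ifs <;> simp [erase_eq_of_notMem, ha]

lemma erase_mem_inactiveSets [DecidableEq ι] {I : Finset ι} {a : ι} (ha : a ∉ I)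
    {h : ι → X → ℝ} {m : ℕ} {s : Finset ι} (hs : s ∈ inactiveSets (insert a I) h m) :
    s.erase a ∈ inactiveSets I h m := by
  obtain ⟨x, hx, rfl, hcard⟩ := hs
  exact ⟨x, fun i hi => hx i (mem_insert_of_mem hi), (erase_inactiveSet_insert ha h x).symm,
    card_erase_le.trans hcard⟩

lemma inactiveSet_inter_subset_of_le [DecidableEq ι] {I J : Finset ι} {h : ι → ℝ → ℝ}
    (hJ : ∀ i ∈ J, Monotone (h i)) {t t' : ℝ} (htt' : t ≤ t') :
    inactiveSet I h t' ∩ J ⊆ inactiveSet I h t ∩ J := by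
  intro i
  simp only [inactiveSet, mem_inter, mem_filter]
  rintro ⟨⟨hi, hneg⟩, hiJ⟩
  exact ⟨⟨hi, (hJ i hiJ htt').trans_lt hneg⟩, hiJ⟩

lemma inactiveSet_sdiff_subset_of_le [DecidableEq ι] {I J : Finset ι} {h : ι → ℝ → ℝ}
    (hJ : ∀ i ∈ I \ J, Antitone (h i)) {t t' : ℝ} (htt' : t ≤ t') :
    inactiveSet I h t \ J ⊆ inactiveSet I h t' \ J := by
  intro i
  simp only [inactiveSet, mem_sdiff, mem_filter]
  rintro ⟨⟨hi, hneg⟩, hiJ⟩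
  exact ⟨⟨hi, (hJ i (mem_sdiff.2 ⟨hi, hiJ⟩) htt').trans_lt hneg⟩, hiJ⟩

/-- Along the line the inactive sets of the increasing `h i` shrink and those of the others grow,
so `s ↦ |s ∩ J| - |s \ J|` is injective on patterns. -/
theorem ncard_inactiveSets_le_of_monotone {I : Finset ι} {h : ι → ℝ → ℝ}
    (hh : ∀ i ∈ I, Monotone (h i) ∨ Antitone (h i)) (m : ℕ) :
    (inactiveSets I h m).ncard ≤ min (2 * m) I.card + 1 := by
  classical
  set J := I.filter fun i => Monotone (h i)
  have hJ : ∀ i ∈ J, Monotone (h i) := fun i hi => (mem_filter.1 hi).2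
  have hJc : ∀ i ∈ I \ J, Antitone (h i) := fun i hi => by
    simp only [J, mem_sdiff, mem_filter, not_and] at hi
    exact (hh i hi.1).resolve_left (hi.2 hi.1)
  set Φ : Finset ι → ℤ := fun s => (s ∩ J).card - (s \ J).card
  have hinj : Set.InjOn Φ (inactiveSets I h m) := by
    suffices key : ∀ t t' : ℝ, t ≤ t' → Φ (inactiveSet I h t) = Φ (inactiveSet I h t') →
        inactiveSet I h t = inactiveSet I h t' by
      rintro _ ⟨t, -, rfl, -⟩ _ ⟨t', -, rfl, -⟩ hΦ
      rcases le_total t t' with htt' | htt'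
      · exact key t t' htt' hΦ
      · exact (key t' t htt' hΦ.symm).symm
    intro t t' htt' hΦ
    have h₁ := inactiveSet_inter_subset_of_le (I := I) hJ htt'
    have h₂ := inactiveSet_sdiff_subset_of_le hJc htt'
    have c₁ := card_le_card h₁
    have c₂ := card_le_card h₂
    simp only [Φ] at hΦ
    rw [← sdiff_union_inter (inactiveSet I h t) J, ← sdiff_union_inter (inactiveSet I h t') J,
      eq_of_subset_of_card_le h₂ (by omega), eq_of_subset_of_card_le h₁ (by omega)]
  have hmaps : ∀ s ∈ inactiveSets I h m,
      Φ s ∈ (Icc (-(min m (I.card - J.card) : ℕ) : ℤ) (min m J.card) : Set ℤ) := by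
    rintro _ ⟨t, -, rfl, hcard⟩
    have c₁ : (inactiveSet I h t ∩ J).card ≤ J.card := card_le_card inter_subset_right
    have c₂ : (inactiveSet I h t ∩ J).card + (inactiveSet I h t \ J).card ≤ m := by
      rw [add_comm, card_sdiff_add_card_inter]; exact hcard
    have c₃ : (inactiveSet I h t \ J).card ≤ I.card - J.card := by
      rw [← card_sdiff_of_subset (filter_subset _ I)]
      exact card_le_card (sdiff_subset_sdiff (filter_subset _ _) le_rfl)
    simp only [Φ, coe_Icc, Set.mem_Icc]
    omega
  have hJI : J.card ≤ I.card := card_filter_le _ _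
  refine (Set.ncard_le_ncard_of_injOn Φ hmaps hinj (finite_toSet _)).trans ?_
  rw [Set.ncard_coe_finset, Int.card_Icc]
  omega

end Patterns

lemma lineMap_neg_iff_and_ne_zero {a b t : ℝ} (ha : a ≠ 0) (hb : b ≠ 0) (hab : b < 0 ↔ a < 0)
    (ht₀ : 0 ≤ t) (ht₁ : t ≤ 1) :
    (AffineMap.lineMap a b t < 0 ↔ a < 0) ∧ AffineMap.lineMap a b t ≠ 0 := by
  rw [AffineMap.lineMap_apply_ring']
  rcases ha.lt_or_gt with ha' | ha'
  · have hb' := hab.2 ha'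
    have : t * (b - a) + a < 0 := by rcases le_total a b with hle | hle <;> nlinarith
    exact ⟨by simp [this, ha'], this.ne⟩
  · have hb' : 0 < b := lt_of_le_of_ne (not_lt.1 (mt hab.1 ha'.not_gt)) hb.symm
    have : 0 < t * (b - a) + a := by rcases le_total a b with hle | hle <;> nlinarith
    exact ⟨by simp [this.not_gt, ha'.not_gt], this.ne'⟩

lemma affineMap_monotone_or_antitone (f : ℝ →ᵃ[ℝ] ℝ) : Monotone f ∨ Antitone f := by
  have hf : ∀ t, f t = t * (f 1 - f 0) + f 0 := fun t => by
    simpa [AffineMap.lineMap_apply_ring'] using f.apply_lineMap 0 1 t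
  rcases le_total 0 (f 1 - f 0) with hk | hk
  · exact Or.inl fun s t hst => by rw [hf s, hf t]; nlinarith
  · exact Or.inr fun s t hst => by rw [hf s, hf t]; nlinarith

section Affine

variable {ι V P : Type*} [AddCommGroup V] [Module ℝ V] [AddTorsor V P]

theorem ncard_inactiveSets_le_of_finrank_eq_one (hV : Module.finrank ℝ V = 1) (I : Finset ι)
    (h : ι → P →ᵃ[ℝ] ℝ) (m : ℕ) :
    (inactiveSets I (fun i => h i) m).ncard ≤ regionBound I.card 1 m := by
  have := Module.nontrivial_of_finrank_eq_succ hV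
  obtain ⟨v, hv⟩ := exists_ne (0 : V)
  obtain ⟨p₀⟩ := AddTorsor.nonempty (G := V) (P := P)
  set e : ℝ →ᵃ[ℝ] P := AffineMap.lineMap p₀ (v +ᵥ p₀)
  have he : Function.Surjective e := fun p => by
    obtain ⟨c, hc⟩ := (finrank_eq_one_iff_of_nonzero' v hv).1 hV (p -ᵥ p₀)
    exact ⟨c, by rw [AffineMap.lineMap_vadd_apply, hc, vsub_vadd]⟩
  rw [regionBound_one, ← inactiveSets_comp_of_surjective he]
  exact ncard_inactiveSets_le_of_monotone
    (fun i _ => affineMap_monotone_or_antitone ((h i).comp e)) m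

/-- The point is where the segment from `x` to `y` crosses `f = 0`. -/
lemma exists_zero_inactiveSet_eq {I : Finset ι} {h : ι → P →ᵃ[ℝ] ℝ} {f : P →ᵃ[ℝ] ℝ} {x y : P}
    (hfx : 0 < f x) (hfy : f y < 0) (hx : ∀ i ∈ I, h i x ≠ 0) (hy : ∀ i ∈ I, h i y ≠ 0)
    (hxy : inactiveSet I (fun i => h i) x = inactiveSet I (fun i => h i) y) :
    ∃ z, f z = 0 ∧ (∀ i ∈ I, h i z ≠ 0) ∧
      inactiveSet I (fun i => h i) z = inactiveSet I (fun i => h i) x := by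
  set t := f x / (f x - f y)
  have ht₀ : 0 ≤ t := div_nonneg hfx.le (by linarith)
  have ht₁ : t ≤ 1 := (div_le_one (by linarith)).2 (by linarith)
  have hsign : ∀ i ∈ I, (h i (AffineMap.lineMap x y t) < 0 ↔ h i x < 0) ∧
      h i (AffineMap.lineMap x y t) ≠ 0 := fun i hi => by
    have hxy_i : h i y < 0 ↔ h i x < 0 := by
      simpa [inactiveSet, hi] using (Finset.ext_iff.1 hxy i).symm
    rw [AffineMap.apply_lineMap]
    exact lineMap_neg_iff_and_ne_zero (hx i hi) (hy i hi) hxy_i ht₀ ht₁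
  refine ⟨AffineMap.lineMap x y t, ?_, fun i hi => (hsign i hi).2, ?_⟩
  · rw [AffineMap.apply_lineMap, AffineMap.lineMap_apply_ring']
    have : t * (f x - f y) = f x := div_mul_cancel₀ _ (by linarith)
    linarith
  · ext i
    simp only [inactiveSet, mem_filter]
    exact and_congr_right fun hi => (hsign i hi).1

lemma exists_zero_of_mem_of_insert_mem [DecidableEq ι] {I : Finset ι} {a : ι} (ha : a ∉ I)
    {h : ι → P →ᵃ[ℝ] ℝ} {k k' : ℕ} {s : Finset ι}
    (hs : s ∈ inactiveSets (insert a I) (fun i => h i) k) (has : a ∉ s)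
    (hs' : insert a s ∈ inactiveSets (insert a I) (fun i => h i) k') :
    ∃ z, h a z = 0 ∧ (∀ i ∈ I, h i z ≠ 0) ∧ inactiveSet I (fun i => h i) z = s := by
  obtain ⟨x, hx, hxs, -⟩ := hs
  obtain ⟨y, hy, hys, -⟩ := hs'
  have hax : 0 < h a x := by
    refine lt_of_le_of_ne (not_lt.1 fun hneg => has ?_) (hx a (mem_insert_self a I)).symm
    rw [← hxs]
    exact mem_filter.2 ⟨mem_insert_self a I, hneg⟩
  have hay : h a y < 0 := by
    have : a ∈ inactiveSet (insert a I) (fun i => h i) y := hys ▸ mem_insert_self a s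
    exact (mem_filter.1 this).2
  have hxs' : inactiveSet I (fun i => h i) x = s := by
    rw [← erase_inactiveSet_insert ha, hxs, erase_eq_of_notMem has]
  have hys' : inactiveSet I (fun i => h i) y = s := by
    rw [← erase_inactiveSet_insert ha, hys, erase_insert has]
  obtain ⟨z, hz, hzI, hzs⟩ := exists_zero_inactiveSet_eq hax hay
    (fun i hi => hx i (mem_insert_of_mem hi)) (fun i hi => hy i (mem_insert_of_mem hi))
    (hxs'.trans hys'.symm)
  exact ⟨z, hz, hzI, hzs.trans hxs'⟩

/-- `s` and `insert a s` are realized on opposite sides of `h a = 0`, hence `s` is realized on that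
hyperplane. -/
lemma ncard_split_by_hyperplane_le [DecidableEq ι] {d : ℕ} (hV : Module.finrank ℝ V = d + 1)
    {I : Finset ι} {a : ι} (ha : a ∉ I) (h : ι → P →ᵃ[ℝ] ℝ) (m B : ℕ)
    (hB : ∀ (H : AffineSubspace ℝ P) [Nonempty H], Module.finrank ℝ H.direction = d →
      (inactiveSets I (fun i => (h i).comp H.subtype) m).ncard ≤ B) :
    {s | s ∈ inactiveSets (insert a I) (fun i => h i) (m + 1) ∧ a ∉ s ∧
      insert a s ∈ inactiveSets (insert a I) (fun i => h i) (m + 1)}.ncard ≤ B := by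
  set D := {s | s ∈ inactiveSets (insert a I) (fun i => h i) (m + 1) ∧ a ∉ s ∧
      insert a s ∈ inactiveSets (insert a I) (fun i => h i) (m + 1)}
  rcases D.eq_empty_or_nonempty with hD | ⟨s₀, hs₀, has₀, hins₀⟩
  · simp [hD]
  obtain ⟨z₀, hz₀, -, -⟩ := exists_zero_of_mem_of_insert_mem ha hs₀ has₀ hins₀
  obtain ⟨x, hx, -, -⟩ := hs₀
  have hlin : (h a).linear ≠ 0 := fun h0 => hx a (mem_insert_self a I) <| by
    simpa [hz₀, h0] using ((h a).linearMap_vsub x z₀).symm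
  have := Module.finite_of_finrank_eq_succ hV
  set H := AffineSubspace.mk' z₀ (LinearMap.ker (h a).linear)
  have hH : Module.finrank ℝ H.direction = d := by
    have := Module.Dual.finrank_ker_add_one_of_ne_zero hlin
    rw [AffineSubspace.direction_mk']
    omega
  refine (Set.ncard_le_ncard ?_ (inactiveSets_finite _ _ _)).trans (hB H hH)
  rintro s ⟨hs, has, hins⟩
  obtain ⟨z, hz, hzI, hzs⟩ := exists_zero_of_mem_of_insert_mem ha hs has hins
  have hzH : z ∈ H := by
    rw [AffineSubspace.mem_mk', LinearMap.mem_ker, AffineMap.linearMap_vsub, hz, hz₀, vsub_self]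
  obtain ⟨-, -, -, hcard⟩ := hins
  rw [card_insert_of_notMem has] at hcard
  exact ⟨⟨z, hzH⟩, hzI, hzs, by omega⟩

theorem ncard_inactiveSets_le {V : Type*} {P : Type*} [AddCommGroup V] [Module ℝ V]
    [AddTorsor V P] {d : ℕ} (hd : 1 ≤ d) (hV : Module.finrank ℝ V = d) (I : Finset ι)
    (h : ι → P →ᵃ[ℝ] ℝ) (m : ℕ) :
    (inactiveSets I (fun i => h i) m).ncard ≤ regionBound I.card d m := by
  classical
  induction d, hd using Nat.le_induction generalizing V P I h m with
  | base => exact ncard_inactiveSets_le_of_finrank_eq_one hV I h m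
  | succ d hd IH =>
    induction I using Finset.induction_on generalizing m with
    | empty =>
      exact (ncard_inactiveSets_le_one (Or.inl rfl) _).trans (one_le_regionBound (by omega) _ _)
    | insert a I ha IHI =>
      rcases m with _ | m
      · exact (ncard_inactiveSets_le_one (Or.inr rfl) _).trans
          (one_le_regionBound (by omega) _ _)
      rw [ncard_eq_ncard_image_erase_add (inactiveSets_finite _ _ _) a, card_insert_of_notMem ha,
        regionBound_succ_succ hd]
      refine add_le_add ?_ (ncard_split_by_hyperplane_le hV ha h m _ fun H _ hH => IH hH I _ m)
      refine (Set.ncard_le_ncard ?_ (inactiveSets_finite _ _ _)).trans (IHI (m + 1))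
      rintro _ ⟨s, hs, rfl⟩
      exact erase_mem_inactiveSets ha hs

end Affine

lemma neg_iff_of_isPreconnected {X : Type*} [TopologicalSpace X] {C : Set X}
    (hC : IsPreconnected C) {f : X → ℝ} (hf : ContinuousOn f C) (hf₀ : ∀ z ∈ C, f z ≠ 0)
    {x y : X} (hx : x ∈ C) (hy : y ∈ C) : f y < 0 ↔ f x < 0 := by
  have key : ∀ {x y}, x ∈ C → y ∈ C → f y < 0 → f x < 0 := fun {x y} hx hy hfy => by
    by_contra hfx
    obtain ⟨z, hz, hfz⟩ := hC.intermediate_value hy hx hf ⟨hfy.le, not_lt.1 hfx⟩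
    exact hf₀ z hz hfz
  exact ⟨key hx hy, key hy hx⟩

lemma pos_iff_of_mem_connectedComponentIn {ι X : Type*} [TopologicalSpace X]
    {h : ι → X → ℝ} (hcont : ∀ i, Continuous (h i)) {x y : X}
    (hy : y ∈ connectedComponentIn {z | ∀ i, h i z ≠ 0} x) (i : ι) :
    0 < h i y ↔ ¬ h i x < 0 := by
  have hx := connectedComponentIn_nonempty_iff.1 ⟨y, hy⟩
  have hne : ∀ z ∈ connectedComponentIn {z | ∀ i, h i z ≠ 0} x, h i z ≠ 0 :=
    fun z hz => (connectedComponentIn_subset _ _ hz : ∀ i, h i z ≠ 0) i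
  rw [← neg_iff_of_isPreconnected isPreconnected_connectedComponentIn (hcont i).continuousOn hne
    (mem_connectedComponentIn hx) hy, not_lt]
  exact ⟨le_of_lt, fun hle => lt_of_le_of_ne hle (hne y hy).symm⟩

section Regions

variable {ι E : Type*} [Fintype ι] [AddCommGroup E] [Module ℝ E] [TopologicalSpace E]
  [ContinuousAdd E] [ContinuousSMul ℝ E] {h : ι → E →ᵃ[ℝ] ℝ}

lemma connectedComponentIn_eq_of_inactiveSet_eq {x y : E} (hx : ∀ i, h i x ≠ 0)
    (hy : ∀ i, h i y ≠ 0)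
    (hxy : inactiveSet univ (fun i => h i) x = inactiveSet univ (fun i => h i) y) :
    connectedComponentIn {z | ∀ i, h i z ≠ 0} x = connectedComponentIn {z | ∀ i, h i z ≠ 0} y := by
  refine connectedComponentIn_eq ((convex_segment x y).isPreconnected.subset_connectedComponentIn
    (left_mem_segment ℝ x y) ?_ (right_mem_segment ℝ x y))
  rw [segment_eq_image_lineMap]
  rintro _ ⟨t, ⟨ht₀, ht₁⟩, rfl⟩ i
  have hxy_i : h i y < 0 ↔ h i x < 0 := by
    simpa [inactiveSet] using (Finset.ext_iff.1 hxy i).symm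
  rw [AffineMap.apply_lineMap]
  exact (lineMap_neg_iff_and_ne_zero (hx i) (hy i) hxy_i ht₀ ht₁).2

theorem ncard_regions_le (hcont : ∀ i, Continuous (h i)) (m : ℕ) :
    {R : Set E | (∃ x, (∀ i, h i x ≠ 0) ∧ R = connectedComponentIn {y | ∀ i, h i y ≠ 0} x) ∧
        Fintype.card ι - m ≤ {i | ∀ x ∈ R, 0 < h i x}.ncard}.ncard ≤
      (inactiveSets univ (fun i => h i) m).ncard := by
  classical
  have hactive : ∀ x, (∀ i, h i x ≠ 0) →
      univ.filter (fun i => ¬ ∀ y ∈ connectedComponentIn {y | ∀ i, h i y ≠ 0} x, 0 < h i y) =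
        inactiveSet univ (fun i => h i) x := fun x hx => by
    have hxx := mem_connectedComponentIn (F := {y | ∀ i, h i y ≠ 0}) hx
    ext i
    simp only [inactiveSet, mem_filter, mem_univ, true_and]
    rw [← not_iff_not, not_not]
    exact ⟨fun hpos => (pos_iff_of_mem_connectedComponentIn hcont hxx i).1 (hpos x hxx),
      fun hnn y hy => (pos_iff_of_mem_connectedComponentIn hcont hy i).2 hnn⟩
  refine Set.ncard_le_ncard_of_injOn (fun R => univ.filter fun i => ¬ ∀ x ∈ R, 0 < h i x) ?_ ?_
    (inactiveSets_finite _ _ _)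
  · rintro _ ⟨⟨x, hx, rfl⟩, hcard⟩
    refine ⟨x, fun i _ => hx i, (hactive x hx).symm, ?_⟩
    have hsum : {i | ∀ y ∈ connectedComponentIn {y | ∀ i, h i y ≠ 0} x, 0 < h i y}.ncard +
        (univ.filter fun i =>
          ¬ ∀ y ∈ connectedComponentIn {y | ∀ i, h i y ≠ 0} x, 0 < h i y).card =
        Fintype.card ι := by
      rw [Set.ncard_eq_toFinset_card', Set.toFinset_ofPred, card_filter_add_card_filter_not,
        card_univ]
    rw [hactive x hx] at hsum ⊢
    omega
  · rintro _ ⟨⟨x, hx, rfl⟩, -⟩ _ ⟨⟨y, hy, rfl⟩, -⟩ hxy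
    exact connectedComponentIn_eq_of_inactiveSet_eq hx hy
      ((hactive x hx).symm.trans (hxy.trans (hactive y hy)))

end Regions

end HyperplaneArrangement

theorem stmt_5_general (d : ℕ) (hd : 1 ≤ d) (nn : ℕ)
    (h : Fin nn → (Fin d → ℝ) → ℝ) (haff : ∀ i, IsAffineFun (h i))
    (m : ℕ) :
    {R : Set (Fin d → ℝ) |
        (∃ x : Fin d → ℝ, (∀ i, h i x ≠ 0) ∧
          R = connectedComponentIn {y | ∀ i, h i y ≠ 0} x) ∧
        nn - m ≤ {i : Fin nn | ∀ x ∈ R, 0 < h i x}.ncard}.ncard ≤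
      ∑ j ∈ Finset.range (m + 1), fjd j (d : ℤ) nn ∧
    ∀ j : ℕ, (nn : ℤ) + min (d : ℤ) (nn : ℤ) < 2 * (j : ℤ) → fjd j (d : ℤ) nn = 0 := by
  choose g hg using fun i => (haff i).exists_affineMap
  obtain rfl : h = fun i => ⇑(g i) := funext fun i => (hg i).symm
  refine ⟨?_, fun j hj => HyperplaneArrangement.fjd_eq_zero hj⟩
  have hregions := HyperplaneArrangement.ncard_regions_le
    (fun i => (g i).continuous_of_finiteDimensional) m
  rw [Fintype.card_fin] at hregions
  have hpatterns :=
    HyperplaneArrangement.ncard_inactiveSets_le hd (Module.finrank_fin_fun ℝ) Finset.univ g m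
  rw [Finset.card_univ, Fintype.card_fin] at hpatterns
  exact hregions.trans hpatterns

/-- the number of regions of an arrangement of `n` affine hyperplanes in `ℝ^d`
whose activation set has size at least `n - m` is at most `∑_{j=0}^m f_{j,d}(n)`;
moreover `f_{j,d}(n) = 0` for `j > (n + min{d,n})/2`. -/
theorem stmt_5 (d : ℕ) (hd : 1 ≤ d) (nn : ℕ) (hn : 1 ≤ nn)
    (h : Fin nn → (Fin d → ℝ) → ℝ) (haff : ∀ i, IsAffineFun (h i))
    (m : ℕ) (hm : m ≤ nn) :
    {R : Set (Fin d → ℝ) |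
        (∃ x : Fin d → ℝ, (∀ i, h i x ≠ 0) ∧
          R = connectedComponentIn {y | ∀ i, h i y ≠ 0} x) ∧
        nn - m ≤ {i : Fin nn | ∀ x ∈ R, 0 < h i x}.ncard}.ncard ≤
      ∑ j ∈ Finset.range (m + 1), fjd j (d : ℤ) nn ∧
    ∀ j : ℕ, (nn : ℤ) + min (d : ℤ) (nn : ℤ) < 2 * (j : ℤ) → fjd j (d : ℤ) nn = 0 :=
  stmt_5_general d hd nn h haff m
end
end

section
/- For all positive integers n_0 and n_1, the maximal number of linear regions of a function computed by a ReLU network of design (n_0, n_1, 1), i.e. with one hidden layer of width n_1, input dimension n_0 and output dimension 1, equals Σ_{i=0}^{min{n_0, n_1}} C(n_1, i), where C(a,b) is the binomial coefficient. -/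
open scoped BigOperators
open MeasureTheory

noncomputable section

/-!
A one-hidden-layer network computes `f x = ∑ i, c i * relu (a i ⬝ᵥ x + b i) + e`. Neurons with
`a i = 0` only shift `e`, so assume all rows are nonzero. Every linear region then contains a
point off all the hyperplanes `a i ⬝ᵥ x + b i = 0`, and the open cell of that point's activation
pattern, on which `f` is affine, is absorbed into the region; hence regions inject into activation
patterns. A linear relation `∑ μ i • a i = 0` among rows indexed by `T` forbids the trace
`{i ∈ T | 0 < μ i}` (or that of `-μ`), so the activation patterns have VC dimension at most `d`
and the Sauer–Shelah lemma bounds their number by `∑ k ≤ d, n.choose k`.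

For the lower bound put the rows on the moment curve, `a i = (tᵢ, tᵢ², …, tᵢᵈ)` with `tᵢ = i + 1`
and `b i = 1`: the neuron values at the coefficient vector of a polynomial `p` of degree `≤ d`
with `p 0 = 1` are the values `p tᵢ`. For `#K ≤ d`, the polynomial with roots `k + 1/2`, `k ∈ K`,
realizes the pattern `{i | Even #(K ∩ Iic i)}`, and these patterns are pairwise distinct. The
output weights `2 ^ i / tᵢ` make the affine pieces of distinct cells distinct, so each of these
cells is a linear region.
-/

open Finset Filter Topology Polynomial

section AffineFunctional

variable {κ : Type*} [Fintype κ]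

theorem exists_dotProduct_lt_of_mem_nhds {a p : κ → ℝ} (ha : a ≠ 0) {U : Set (κ → ℝ)}
    (hU : U ∈ 𝓝 p) : ∃ x ∈ U, a ⬝ᵥ x < a ⬝ᵥ p := by
  have hline : Tendsto (fun t : ℝ => p - t • a) (𝓝[>] 0) (𝓝 p) := by
    have : Continuous fun t : ℝ => p - t • a := by fun_prop
    simpa using (this.tendsto 0).mono_left nhdsWithin_le_nhds
  obtain ⟨t, htU, ht⟩ := ((hline.eventually hU).and self_mem_nhdsWithin).exists
  have haa : 0 < a ⬝ᵥ a :=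
    (Fintype.sum_nonneg fun i => mul_self_nonneg (a i)).lt_of_ne' (dotProduct_self_eq_zero.not.2 ha)
  refine ⟨p - t • a, htU, ?_⟩
  rw [dotProduct_sub, dotProduct_smul, smul_eq_mul]
  exact sub_lt_self _ (mul_pos ht haa)

theorem exists_dotProduct_gt_of_mem_nhds {a p : κ → ℝ} (ha : a ≠ 0) {U : Set (κ → ℝ)}
    (hU : U ∈ 𝓝 p) : ∃ x ∈ U, a ⬝ᵥ p < a ⬝ᵥ x := by
  obtain ⟨x, hx, hlt⟩ := exists_dotProduct_lt_of_mem_nhds (neg_ne_zero.2 ha) hU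
  exact ⟨x, hx, by simpa only [neg_dotProduct, neg_lt_neg_iff] using hlt⟩

theorem dense_setOf_forall_dotProduct_add_ne_zero {ι : Type*} [Finite ι] {a : ι → κ → ℝ}
    (b : ι → ℝ) (ha : ∀ i, a i ≠ 0) : Dense {x | ∀ i, a i ⬝ᵥ x + b i ≠ 0} := by
  rw [Set.ofPred_forall]
  refine dense_iInter_of_isOpen (fun i => isOpen_ne_fun (by fun_prop) continuous_const) fun i => ?_
  rw [dense_iff_inter_open]
  rintro U hU ⟨p, hp⟩
  by_cases hpi : a i ⬝ᵥ p + b i = 0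
  · obtain ⟨x, hx, hlt⟩ := exists_dotProduct_lt_of_mem_nhds (ha i) (hU.mem_nhds hp)
    exact ⟨x, hx, by simp only [Set.mem_ofPred_eq]; linarith⟩
  · exact ⟨p, hp, hpi⟩

end AffineFunctional

theorem IsAffineMap.eq_of_eqOn_s6 {n m : ℕ} {g g' : (Fin n → ℝ) → Fin m → ℝ} (hg : IsAffineMap g)
    (hg' : IsAffineMap g') {U : Set (Fin n → ℝ)} (hU : IsOpen U) (hne : U.Nonempty)
    (h : Set.EqOn g g' U) : g = g' := by
  obtain ⟨A, b, hA⟩ := hg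
  obtain ⟨A', b', hA'⟩ := hg'
  obtain ⟨p, hp⟩ := hne
  have hdiff : ∀ i, ∀ x ∈ U, A i ⬝ᵥ x + b i = A' i ⬝ᵥ x + b' i := fun i x hx => by
    rw [dotProduct, dotProduct, ← hA, ← hA', h hx]
  have hrow : ∀ i, A i = A' i := by
    intro i
    by_contra hAi
    obtain ⟨x, hx, hlt⟩ := exists_dotProduct_lt_of_mem_nhds (sub_ne_zero.2 hAi) (hU.mem_nhds hp)
    rw [sub_dotProduct, sub_dotProduct] at hlt
    linarith [hdiff i x hx, hdiff i p hp]
  funext x i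
  have hb : b i = b' i := by simpa only [hrow i, add_right_inj] using hdiff i p hp
  simp only [hA, hA', hrow i, hb]

theorem IsLinearRegion.subset_of_eqOn {n m : ℕ} {f g : (Fin n → ℝ) → Fin m → ℝ}
    {R O : Set (Fin n → ℝ)} (hR : IsLinearRegion f R) (hO : IsOpen O) (hg : IsAffineMap g)
    (hfg : Set.EqOn f g O) (hRO : (R ∩ O).Nonempty) : O ⊆ R := by
  obtain ⟨hRopen, -, ⟨gR, hgR, hfgR⟩, hmax⟩ := hR
  have hgg : gR = g := hgR.eq_of_eqOn_s6 hg (hRopen.inter hO) hRO fun x hx =>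
    (hfgR hx.1).symm.trans (hfg hx.2)
  by_contra hOR
  refine hmax (R ∪ O) (hRopen.union hO) (Set.ssubset_union_left_iff.2 hOR) ⟨g, hg, ?_⟩
  rintro x (hx | hx)
  · exact hgg ▸ hfgR hx
  · exact hfg hx

theorem IsLinearRegion.eq_of_inter_nonempty {n m : ℕ} {f : (Fin n → ℝ) → Fin m → ℝ}
    {R₁ R₂ : Set (Fin n → ℝ)} (h₁ : IsLinearRegion f R₁) (h₂ : IsLinearRegion f R₂)
    (hne : (R₁ ∩ R₂).Nonempty) : R₁ = R₂ := by
  obtain ⟨g₁, hg₁, hfg₁⟩ := h₁.2.2.1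
  obtain ⟨g₂, hg₂, hfg₂⟩ := h₂.2.2.1
  exact (h₂.subset_of_eqOn h₁.1 hg₁ hfg₁ (Set.inter_comm _ _ ▸ hne)).antisymm
    (h₁.subset_of_eqOn h₂.1 hg₂ hfg₂ hne)

section ShallowNet

variable {ι : Type*} {d : ℕ} (a : ι → Fin d → ℝ) (b c : ι → ℝ) (e : ℝ)

def cell (S : Finset ι) : Set (Fin d → ℝ) :=
  {x | (∀ i ∈ S, 0 < a i ⬝ᵥ x + b i) ∧ ∀ i ∉ S, a i ⬝ᵥ x + b i < 0}

def piece (S : Finset ι) : (Fin d → ℝ) → Fin 1 → ℝ :=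
  fun x _ => ∑ i ∈ S, c i * (a i ⬝ᵥ x + b i) + e

theorem piece_isAffineMap (S : Finset ι) : IsAffineMap (piece a b c e S) := by
  refine ⟨fun _ => ∑ i ∈ S, c i • a i, fun _ => ∑ i ∈ S, c i * b i + e, fun x _ => ?_⟩
  change _ = (∑ i ∈ S, c i • a i) ⬝ᵥ x + _
  simp only [piece, sum_dotProduct, smul_dotProduct, smul_eq_mul, mul_add, sum_add_distrib]
  ring

theorem convex_cell (S : Finset ι) : Convex ℝ (cell a b S) := by
  have hlin : ∀ i, IsLinearMap ℝ fun x : Fin d → ℝ => a i ⬝ᵥ x := fun i =>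
    ⟨dotProduct_add (a i), fun r x => dotProduct_smul r (a i) x⟩
  have hgt : ∀ i, {x | 0 < a i ⬝ᵥ x + b i} = {x | -b i < a i ⬝ᵥ x} := fun i => by
    ext; simp only [Set.mem_ofPred_eq]; constructor <;> intro <;> linarith
  have hlt : ∀ i, {x | a i ⬝ᵥ x + b i < 0} = {x | a i ⬝ᵥ x < -b i} := fun i => by
    ext; simp only [Set.mem_ofPred_eq]; constructor <;> intro <;> linarith
  simp only [cell, Set.ofPred_and, Set.ofPred_forall]
  exact (convex_iInter fun i => convex_iInter fun _ => hgt i ▸ convex_halfSpace_gt (hlin i) _).inter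
    (convex_iInter fun i => convex_iInter fun _ => hlt i ▸ convex_halfSpace_lt (hlin i) _)

theorem exists_open_subset_disjoint_cell (ha : ∀ i, a i ≠ 0) {S : Finset ι} {p : Fin d → ℝ}
    (hp : p ∉ cell a b S) {U : Set (Fin d → ℝ)} (hU : U ∈ 𝓝 p) :
    ∃ V, IsOpen V ∧ V.Nonempty ∧ V ⊆ U ∧ Disjoint V (cell a b S) := by
  obtain ⟨W, hWU, hWo, hpW⟩ := mem_nhds_iff.1 hU
  have hcont : ∀ i, Continuous fun x : Fin d → ℝ => a i ⬝ᵥ x + b i := by fun_prop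
  simp only [cell, Set.mem_ofPred_eq, not_and_or, not_forall, not_lt, exists_prop] at hp
  rcases hp with ⟨i, hi, hpi⟩ | ⟨i, hi, hpi⟩
  · obtain ⟨x, hxW, hx⟩ := exists_dotProduct_lt_of_mem_nhds (ha i) (hWo.mem_nhds hpW)
    refine ⟨W ∩ {x | a i ⬝ᵥ x + b i < 0}, hWo.inter (isOpen_lt (hcont i) continuous_const),
      ⟨x, hxW, by simp only [Set.mem_ofPred_eq]; linarith⟩, Set.inter_subset_left.trans hWU,
      Set.disjoint_left.2 fun y hy hyS => (hyS.1 i hi).not_gt hy.2⟩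
  · obtain ⟨x, hxW, hx⟩ := exists_dotProduct_gt_of_mem_nhds (ha i) (hWo.mem_nhds hpW)
    refine ⟨W ∩ {x | 0 < a i ⬝ᵥ x + b i}, hWo.inter (isOpen_lt continuous_const (hcont i)),
      ⟨x, hxW, by simp only [Set.mem_ofPred_eq]; linarith⟩, Set.inter_subset_left.trans hWU,
      Set.disjoint_left.2 fun y hy hyS => (hyS.2 i hi).not_gt hy.2⟩

variable [Fintype ι]

def shallowNet : (Fin d → ℝ) → Fin 1 → ℝ :=
  fun x _ => ∑ i, c i * relu (a i ⬝ᵥ x + b i) + e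

def activeSet (x : Fin d → ℝ) : Finset ι := {i | 0 < a i ⬝ᵥ x + b i}

theorem isOpen_cell (S : Finset ι) : IsOpen (cell a b S) := by
  have hcont : ∀ i, Continuous fun x : Fin d → ℝ => a i ⬝ᵥ x + b i := by fun_prop
  simp only [cell, Set.ofPred_and, Set.ofPred_forall]
  exact (isOpen_iInter_of_finite fun i => isOpen_iInter_of_finite fun _ =>
    isOpen_lt continuous_const (hcont i)).inter
    (isOpen_iInter_of_finite fun i => isOpen_iInter_of_finite fun _ =>
    isOpen_lt (hcont i) continuous_const)

theorem mem_cell_activeSet {x : Fin d → ℝ} (hx : ∀ i, a i ⬝ᵥ x + b i ≠ 0) :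
    x ∈ cell a b (activeSet a b x) := by
  refine ⟨fun i hi => (mem_filter.1 hi).2, fun i hi => ?_⟩
  simp only [activeSet, mem_filter, mem_univ, true_and, not_lt] at hi
  exact hi.lt_of_ne (hx i)

theorem activeSet_eq_of_mem_cell {S : Finset ι} {x : Fin d → ℝ} (hx : x ∈ cell a b S) :
    activeSet a b x = S := by
  ext i
  simp only [activeSet, mem_filter, mem_univ, true_and]
  by_cases hi : i ∈ S
  · exact iff_of_true (hx.1 i hi) hi
  · exact iff_of_false (hx.2 i hi).not_gt hi

theorem eqOn_shallowNet_piece (S : Finset ι) :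
    Set.EqOn (shallowNet a b c e) (piece a b c e S) (cell a b S) := by
  intro x hx
  funext _
  simp only [shallowNet, piece, add_left_inj]
  calc ∑ i, c i * relu (a i ⬝ᵥ x + b i) = ∑ i ∈ S, c i * relu (a i ⬝ᵥ x + b i) :=
        (sum_subset (subset_univ S) fun i _ hi => by
          rw [relu, max_eq_right (hx.2 i hi).le, mul_zero]).symm
    _ = ∑ i ∈ S, c i * (a i ⬝ᵥ x + b i) :=
        sum_congr rfl fun i hi => by rw [relu, max_eq_left (hx.1 i hi).le]

theorem shallowNet_eq_shallowNet_subtype :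
    shallowNet a b c e = shallowNet (fun i : {i // a i ≠ 0} => a i) (fun i => b i) (fun i => c i)
      (e + ∑ i with a i = 0, c i * relu (b i)) := by
  funext x _
  simp only [shallowNet]
  rw [← sum_filter_add_sum_filter_not univ (fun i => a i = 0),
    sum_subtype {i | a i ≠ 0} (p := fun i => a i ≠ 0) (by simp)]
  have hzero : ∑ i with a i = 0, c i * relu (a i ⬝ᵥ x + b i) = ∑ i with a i = 0, c i * relu (b i) :=
    sum_congr rfl fun i hi => by rw [(mem_filter.1 hi).2, zero_dotProduct, zero_add]
  rw [hzero]
  ring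

theorem IsLinearRegion.exists_cell_activeSet_subset (ha : ∀ i, a i ≠ 0)
    {R : Set (Fin d → ℝ)} (hR : IsLinearRegion (shallowNet a b c e) R) :
    ∃ x, x ∈ cell a b (activeSet a b x) ∧ cell a b (activeSet a b x) ⊆ R := by
  obtain ⟨x, hxR, hx⟩ := (dense_setOf_forall_dotProduct_add_ne_zero b ha).inter_open_nonempty R
    hR.1 hR.2.1.nonempty
  have hxc := mem_cell_activeSet a b hx
  exact ⟨x, hxc, hR.subset_of_eqOn (isOpen_cell a b _) (piece_isAffineMap a b c e _)
    (eqOn_shallowNet_piece a b c e _) ⟨x, hxR, hxc⟩⟩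

theorem isLinearRegion_cell (ha : ∀ i, a i ≠ 0) (hinj : Function.Injective (piece a b c e))
    {S : Finset ι} (hS : (cell a b S).Nonempty) :
    IsLinearRegion (shallowNet a b c e) (cell a b S) := by
  refine ⟨isOpen_cell a b S, ⟨hS, (convex_cell a b S).isPreconnected⟩,
    ⟨_, piece_isAffineMap a b c e S, eqOn_shallowNet_piece a b c e S⟩, ?_⟩
  rintro R' hR' hSR' ⟨g, hg, hfg⟩
  have hgS : g = piece a b c e S := hg.eq_of_eqOn_s6 (piece_isAffineMap a b c e S) (isOpen_cell a b S)
    hS fun x hx => (hfg (hSR'.subset hx)).symm.trans (eqOn_shallowNet_piece a b c e S hx)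
  have hgen : ∀ q ∈ R', (∀ i, a i ⬝ᵥ q + b i ≠ 0) → q ∈ cell a b S := by
    intro q hq hqgen
    have hqc := mem_cell_activeSet a b hqgen
    have hpiece : piece a b c e (activeSet a b q) = g :=
      (piece_isAffineMap a b c e _).eq_of_eqOn_s6 hg ((isOpen_cell a b _).inter hR') ⟨q, hqc, hq⟩
        fun x hx => (eqOn_shallowNet_piece a b c e _ hx.1).symm.trans (hfg hx.2)
    rwa [← hinj (hpiece.trans hgS)]
  obtain ⟨p, hpR', hpS⟩ := Set.exists_of_ssubset hSR'
  obtain ⟨V, hVo, hVne, hVR', hVS⟩ :=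
    exists_open_subset_disjoint_cell a b ha hpS (hR'.mem_nhds hpR')
  obtain ⟨q, hqV, hqgen⟩ := (dense_setOf_forall_dotProduct_add_ne_zero b ha).inter_open_nonempty V
    hVo hVne
  exact Set.disjoint_left.1 hVS hqV (hgen q (hVR' hqV) hqgen)

theorem exists_injOn_setOf_isLinearRegion_shallowNet (ha : ∀ i, a i ≠ 0) :
    ∃ φ : Set (Fin d → ℝ) → Finset ι,
      Set.MapsTo φ {R | IsLinearRegion (shallowNet a b c e) R} (Set.range (activeSet a b)) ∧
      Set.InjOn φ {R | IsLinearRegion (shallowNet a b c e) R} := by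
  choose! x hxc hsub using fun R (hR : IsLinearRegion (shallowNet a b c e) R) =>
    hR.exists_cell_activeSet_subset a b c e ha
  refine ⟨fun R => activeSet a b (x R), fun R _ => ⟨x R, rfl⟩, fun R₁ hR₁ R₂ hR₂
    (h : activeSet a b (x R₁) = activeSet a b (x R₂)) => ?_⟩
  exact IsLinearRegion.eq_of_inter_nonempty hR₁ hR₂
    ⟨x R₁, hsub R₁ hR₁ (hxc R₁ hR₁), hsub R₂ hR₂ (by rw [← h]; exact hxc R₁ hR₁)⟩

theorem finite_setOf_isLinearRegion_shallowNet (ha : ∀ i, a i ≠ 0) :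
    {R | IsLinearRegion (shallowNet a b c e) R}.Finite := by
  obtain ⟨φ, hmaps, hinj⟩ := exists_injOn_setOf_isLinearRegion_shallowNet a b c e ha
  exact Set.Finite.of_injOn hmaps hinj (Set.toFinite _)

theorem numRegions_shallowNet_le_ncard_range_activeSet (ha : ∀ i, a i ≠ 0) :
    numRegions (shallowNet a b c e) ≤ (Set.range (activeSet a b)).ncard := by
  obtain ⟨φ, hmaps, hinj⟩ := exists_injOn_setOf_isLinearRegion_shallowNet a b c e ha
  exact Set.ncard_le_ncard_of_injOn φ hmaps hinj

theorem inter_activeSet_ne_of_sum_eq [DecidableEq ι] {T : Finset ι} {μ : ι → ℝ} {β : ℝ}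
    (hμ : ∀ x, ∑ i ∈ T, μ i * (a i ⬝ᵥ x + b i) = β) (hβ : β < 0 ∨ β ≤ 0 ∧ ∃ i ∈ T, 0 < μ i)
    (x : Fin d → ℝ) : T ∩ activeSet a b x ≠ {i ∈ T | 0 < μ i} := by
  intro hx
  have hmem : ∀ i ∈ T, (i ∈ activeSet a b x ↔ 0 < μ i) := fun i hi => by
    simpa [hi] using congrArg (i ∈ ·) hx
  have hterm : ∀ i ∈ T, 0 ≤ μ i * (a i ⬝ᵥ x + b i) := by
    intro i hi
    by_cases hμi : 0 < μ i
    · exact (mul_pos hμi (mem_filter.1 ((hmem i hi).2 hμi)).2).le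
    · have hxi : ¬ 0 < a i ⬝ᵥ x + b i := fun h =>
        hμi ((hmem i hi).1 (mem_filter.2 ⟨mem_univ i, h⟩))
      exact mul_nonneg_of_nonpos_of_nonpos (not_lt.1 hμi) (not_lt.1 hxi)
  rcases hβ with hβ | ⟨hβ, i, hi, hμi⟩
  · linarith [hμ x, sum_nonneg hterm]
  · have hpos : 0 < ∑ i ∈ T, μ i * (a i ⬝ᵥ x + b i) := sum_pos' hterm
      ⟨i, hi, mul_pos hμi (mem_filter.1 ((hmem i hi).2 hμi)).2⟩
    linarith [hμ x]

theorem linearIndepOn_of_shatters [DecidableEq ι] {𝒜 : Finset (Finset ι)}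
    (h𝒜 : ∀ S ∈ 𝒜, S ∈ Set.range (activeSet a b)) {T : Finset ι} (hT : 𝒜.Shatters T) :
    LinearIndepOn ℝ a T := by
  rw [linearIndepOn_finset_iff]
  intro l hl
  by_contra! hne
  obtain ⟨i₀, hi₀, hl₀⟩ := hne
  have hrel : ∀ x, ∑ i ∈ T, l i * (a i ⬝ᵥ x + b i) = ∑ i ∈ T, l i * b i := fun x => by
    have : ∑ i ∈ T, l i * (a i ⬝ᵥ x) = 0 := by
      simpa only [sum_dotProduct, smul_dotProduct, smul_eq_mul, zero_dotProduct] using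
        congrArg (· ⬝ᵥ x) hl
    simp only [mul_add, sum_add_distrib, this, zero_add]
  have hneg : ∀ x, ∑ i ∈ T, (-l) i * (a i ⬝ᵥ x + b i) = -∑ i ∈ T, l i * b i := fun x => by
    simp only [Pi.neg_apply, neg_mul, sum_neg_distrib, hrel]
  obtain ⟨μ, β, hμ, hβ⟩ : ∃ μ : ι → ℝ, ∃ β, (∀ x, ∑ i ∈ T, μ i * (a i ⬝ᵥ x + b i) = β) ∧
      (β < 0 ∨ β ≤ 0 ∧ ∃ i ∈ T, 0 < μ i) := by
    rcases lt_trichotomy (∑ i ∈ T, l i * b i) 0 with hβ | hβ | hβ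
    · exact ⟨l, _, hrel, .inl hβ⟩
    · rcases hl₀.lt_or_gt with hl₀ | hl₀
      · exact ⟨-l, _, hneg, .inr ⟨by linarith, i₀, hi₀, neg_pos.2 hl₀⟩⟩
      · exact ⟨l, _, hrel, .inr ⟨hβ.le, i₀, hi₀, hl₀⟩⟩
    · exact ⟨-l, _, hneg, .inl (neg_lt_zero.2 hβ)⟩
  obtain ⟨u, hu, hTu⟩ := hT (filter_subset (0 < μ ·) T)
  obtain ⟨x, rfl⟩ := h𝒜 u hu
  exact inter_activeSet_ne_of_sum_eq a b hμ hβ x hTu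

theorem ncard_range_activeSet_le :
    (Set.range (activeSet a b)).ncard ≤ ∑ k ∈ range (d + 1), (Fintype.card ι).choose k := by
  classical
  set 𝒜 := (Set.toFinite (Set.range (activeSet a b))).toFinset
  have hvc : 𝒜.vcDim ≤ d := Finset.sup_le fun T hT => by
    simpa using (linearIndepOn_of_shatters a b (fun S => (Set.Finite.mem_toFinset _).1)
      (mem_shatterer.1 hT)).fintype_card_le_finrank
  calc (Set.range (activeSet a b)).ncard = #𝒜 := Set.ncard_eq_toFinset_card _ _
    _ ≤ #𝒜.shatterer := card_le_card_shatterer 𝒜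
    _ ≤ ∑ k ∈ Iic 𝒜.vcDim, (Fintype.card ι).choose k := card_shatterer_le_sum_vcDim
    _ ≤ ∑ k ∈ Iic d, (Fintype.card ι).choose k := sum_le_sum_of_subset (Iic_subset_Iic.2 hvc)
    _ = _ := by rw [Nat.range_succ_eq_Iic]

theorem numRegions_shallowNet_le :
    numRegions (shallowNet a b c e) ≤ ∑ k ∈ range (d + 1), (Fintype.card ι).choose k := by
  rw [shallowNet_eq_shallowNet_subtype]
  calc _ ≤ _ := numRegions_shallowNet_le_ncard_range_activeSet _ _ _ _ fun i => i.2
    _ ≤ _ := ncard_range_activeSet_le _ _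
    _ ≤ _ := sum_le_sum fun k _ => Nat.choose_le_choose k (Fintype.card_subtype_le _)

end ShallowNet

theorem card_inter_Iic {α : Type*} [PartialOrder α] [LocallyFiniteOrderBot α] [DecidableEq α]
    (M : Finset α) (i : α) : #(M ∩ Iic i) = #(M ∩ Iio i) + if i ∈ M then 1 else 0 := by
  rw [← Iio_insert]
  split_ifs with hi
  · rw [inter_insert_of_mem hi, card_insert_of_notMem (by simp)]
  · rw [inter_insert_of_notMem hi, add_zero]

theorem card_filter_card_le (α : Type*) [Fintype α] (d : ℕ) :
    #{K : Finset α | #K ≤ d} = ∑ k ∈ range (d + 1), (Fintype.card α).choose k := by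
  rw [card_eq_sum_card_fiberwise (f := fun K : Finset α => #K) (t := range (d + 1))
    fun K hK => mem_range.2 (Nat.lt_succ_of_le (mem_filter.1 hK).2)]
  refine sum_congr rfl fun k hk => ?_
  rw [← card_univ, ← card_powersetCard]
  congr 1
  ext K
  simp only [mem_filter, mem_univ, true_and, mem_powersetCard, subset_univ]
  exact ⟨fun h => h.2, fun h => ⟨h ▸ Nat.lt_succ_iff.1 (mem_range.1 hk), h⟩⟩

section MomentCurve

variable {n d : ℕ}

def momentRows (n d : ℕ) : Fin n → Fin d → ℝ := fun i j => ((i : ℕ) + 1 : ℝ) ^ ((j : ℕ) + 1)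

/-- Chosen so that `momentWeights n i * momentRows n d i 0 = 2 ^ i`. -/
def momentWeights (n : ℕ) : Fin n → ℝ := fun i => 2 ^ (i : ℕ) / ((i : ℕ) + 1)

def signChangePoly (K : Finset (Fin n)) : ℝ[X] :=
  ∏ k ∈ K, (1 - C (((k : ℕ) : ℝ) + 1 / 2)⁻¹ * X)

def parityPattern (K : Finset (Fin n)) : Finset (Fin n) := {i | Even #(K ∩ Iic i)}

theorem momentRows_ne_zero (hd : 0 < d) (i : Fin n) : momentRows n d i ≠ 0 := fun h => by
  have := congrFun h ⟨0, hd⟩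
  simp only [momentRows, Pi.zero_apply, pow_eq_zero_iff', ne_eq] at this
  exact absurd this.1 (by positivity)

theorem momentRows_dotProduct_coeff_add_one {p : ℝ[X]} (hp : p.natDegree ≤ d)
    (hp0 : p.coeff 0 = 1) (i : Fin n) :
    momentRows n d i ⬝ᵥ (fun j : Fin d => p.coeff ((j : ℕ) + 1)) + 1 =
      p.eval (((i : ℕ) : ℝ) + 1) := by
  rw [eval_eq_sum_range' (Nat.lt_succ_of_le hp), sum_range_succ', hp0, pow_zero, mul_one,
    dotProduct, ← Fin.sum_univ_eq_sum_range]
  simp only [momentRows, mul_comm]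

theorem natDegree_signChangePoly_le (K : Finset (Fin n)) : (signChangePoly K).natDegree ≤ #K := by
  refine (natDegree_prod_le _ _).trans ?_
  calc _ ≤ ∑ _k ∈ K, 1 := sum_le_sum fun k _ => by compute_degree
    _ = #K := by rw [card_eq_sum_ones]

theorem coeff_zero_signChangePoly (K : Finset (Fin n)) : (signChangePoly K).coeff 0 = 1 := by
  simp [signChangePoly, coeff_zero_eq_eval_zero, eval_prod]

theorem sign_eval_signChangePoly (K : Finset (Fin n)) (i : Fin n) :
    SignType.sign ((signChangePoly K).eval (((i : ℕ) : ℝ) + 1)) = (-1) ^ #(K ∩ Iic i) := by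
  have hfactor : ∀ k : Fin n, SignType.sign (1 - (((k : ℕ) : ℝ) + 1 / 2)⁻¹ * ((i : ℕ) + 1)) =
      if k ∈ Iic i then -1 else 1 := by
    intro k
    have hk : (0 : ℝ) < ((k : ℕ) : ℝ) + 1 / 2 := by positivity
    rw [inv_mul_eq_div]
    by_cases hki : k ≤ i
    · have : ((k : ℕ) : ℝ) ≤ (i : ℕ) := by exact_mod_cast hki
      rw [if_pos (mem_Iic.2 hki)]
      exact sign_neg (sub_neg.2 ((one_lt_div hk).2 (by linarith)))
    · have : ((i : ℕ) : ℝ) + 1 ≤ (k : ℕ) := by exact_mod_cast not_le.1 hki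
      rw [if_neg (mt mem_Iic.1 hki)]
      exact sign_pos (sub_pos.2 ((div_lt_one hk).2 (by linarith)))
  rw [signChangePoly, eval_prod, ← signHom_apply, map_prod]
  simp only [eval_sub, eval_one, eval_mul, eval_C, eval_X, signHom_apply, hfactor, prod_ite,
    prod_const, one_pow, mul_one, filter_mem_eq_inter]

theorem mem_cell_parityPattern {K : Finset (Fin n)} (hK : #K ≤ d) :
    (fun j : Fin d => (signChangePoly K).coeff ((j : ℕ) + 1)) ∈
      cell (momentRows n d) 1 (parityPattern K) := by
  have hval : ∀ i, momentRows n d i ⬝ᵥ (fun j : Fin d => (signChangePoly K).coeff ((j : ℕ) + 1)) +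
      (1 : Fin n → ℝ) i = (signChangePoly K).eval (((i : ℕ) : ℝ) + 1) := fun i =>
    momentRows_dotProduct_coeff_add_one ((natDegree_signChangePoly_le K).trans hK)
      (coeff_zero_signChangePoly K) i
  refine ⟨fun i hi => ?_, fun i hi => ?_⟩ <;> rw [hval] <;>
    simp only [parityPattern, mem_filter, mem_univ, true_and, Nat.not_even_iff_odd] at hi
  · exact sign_eq_one_iff.1 ((sign_eval_signChangePoly K i).trans hi.neg_one_pow)
  · exact sign_eq_neg_one_iff.1 ((sign_eval_signChangePoly K i).trans hi.neg_one_pow)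

theorem parityPattern_injective : Function.Injective (parityPattern (n := n)) := by
  intro K K' h
  have hpar : ∀ i, (Even #(K ∩ Iic i) ↔ Even #(K' ∩ Iic i)) := fun i => by
    simpa [parityPattern] using congrArg (i ∈ ·) h
  suffices ∀ i, K ∩ Iic i = K' ∩ Iic i by
    ext i
    simpa using congrArg (i ∈ ·) (this i)
  intro i
  induction i using WellFoundedLT.induction with
  | _ i ih =>
    have hlt : K ∩ Iio i = K' ∩ Iio i := by
      ext k
      by_cases hki : k < i
      · simpa [hki] using congrArg (k ∈ ·) (ih k hki)
      · simp [hki]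
    have hmem : i ∈ K ↔ i ∈ K' := by
      have := hpar i
      rw [card_inter_Iic, card_inter_Iic, hlt] at this
      by_cases hi : i ∈ K <;> by_cases hi' : i ∈ K' <;>
        simp [hi, hi', Nat.even_add_one, -Nat.not_even_iff_odd] at this ⊢
    rw [← Iio_insert]
    by_cases hi : i ∈ K
    · rw [inter_insert_of_mem hi, inter_insert_of_mem (hmem.1 hi), hlt]
    · rw [inter_insert_of_notMem hi, inter_insert_of_notMem (hmem.not.1 hi), hlt]

theorem piece_momentRows_injective (hd : 0 < d) :
    Function.Injective (piece (momentRows n d) 1 (momentWeights n) 0) := by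
  intro S S' h
  have hslope : ∀ S : Finset (Fin n),
      piece (momentRows n d) 1 (momentWeights n) 0 S (Pi.single ⟨0, hd⟩ 1) 0 -
        piece (momentRows n d) 1 (momentWeights n) 0 S 0 0 =
      ((∑ i ∈ S.map Fin.valEmbedding, 2 ^ i : ℕ) : ℝ) := by
    intro S
    simp only [piece, dotProduct_single, dotProduct_zero, momentRows, momentWeights, Pi.one_apply,
      pow_one, mul_one, zero_add, add_zero, ← sum_sub_distrib, sum_map, Fin.valEmbedding_apply]
    push_cast
    refine sum_congr rfl fun i _ => ?_
    field_simp
    ring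
  have := congrArg (fun f => f (Pi.single ⟨0, hd⟩ 1) 0 - f 0 0) h
  simp only [hslope, Nat.cast_inj] at this
  exact map_injective Fin.valEmbedding (geomSum_injective le_rfl this)

end MomentCurve

theorem computes_shallowNet {n d : ℕ} (a : Fin n → Fin d → ℝ) (b c : Fin n → ℝ) (e : ℝ) :
    Computes d [n] 1 (shallowNet a b c e) :=
  ComputesA.cons (fun x i => a i ⬝ᵥ x + b i) (fun y _ => ∑ i, c i * y i + e) ⟨a, b, fun _ _ => rfl⟩
    (ComputesA.nil _ ⟨fun _ => c, fun _ => e, fun _ _ => rfl⟩)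

theorem Computes.exists_eq_shallowNet {n d : ℕ} {f : (Fin d → ℝ) → Fin 1 → ℝ}
    (hf : Computes d [n] 1 f) :
    ∃ (a : Fin n → Fin d → ℝ) (b c : Fin n → ℝ) (e : ℝ), f = shallowNet a b c e := by
  cases hf with
  | cons f₀ g hf₀ hg =>
    cases hg with
    | nil _ hg =>
      obtain ⟨A, b, hA⟩ := hf₀
      obtain ⟨C, e, hC⟩ := hg
      refine ⟨A, b, C 0, e 0, funext fun x => funext fun k => ?_⟩
      rw [Fin.fin_one_eq_zero k, hC]
      simp only [shallowNet, hA]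
      rfl

theorem exists_computes_numRegions_eq {d : ℕ} (hd : 0 < d) (n : ℕ) :
    ∃ f, Computes d [n] 1 f ∧ numRegions f = ∑ k ∈ range (d + 1), n.choose k := by
  have ha := momentRows_ne_zero (n := n) hd
  refine ⟨_, computes_shallowNet (momentRows n d) 1 (momentWeights n) 0, le_antisymm ?_ ?_⟩
  · simpa using numRegions_shallowNet_le (momentRows n d) 1 (momentWeights n) 0
  calc ∑ k ∈ range (d + 1), n.choose k = {K : Finset (Fin n) | #K ≤ d}.ncard := by
        rw [Set.ncard_eq_toFinset_card', Set.toFinset_ofPred, card_filter_card_le, Fintype.card_fin]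
    _ ≤ _ := Set.ncard_le_ncard_of_injOn (fun K => cell (momentRows n d) 1 (parityPattern K))
        (fun K hK => isLinearRegion_cell _ _ _ _ ha (piece_momentRows_injective hd)
          ⟨_, mem_cell_parityPattern hK⟩)
        (fun K₁ hK₁ K₂ _ (h : cell _ _ (parityPattern K₁) = cell _ _ (parityPattern K₂)) =>
          parityPattern_injective <|
            (activeSet_eq_of_mem_cell _ _ (mem_cell_parityPattern hK₁)).symm.trans
              (activeSet_eq_of_mem_cell _ _ (h ▸ mem_cell_parityPattern hK₁)))
        (finite_setOf_isLinearRegion_shallowNet _ _ _ _ ha)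

theorem sum_range_min_add_one_choose (d n : ℕ) :
    ∑ k ∈ range (min d n + 1), n.choose k = ∑ k ∈ range (d + 1), n.choose k := by
  rcases le_total d n with h | h
  · rw [min_eq_left h]
  · rw [min_eq_right h]
    exact sum_subset (range_subset_range.2 (by omega)) fun k _ hk =>
      Nat.choose_eq_zero_of_lt (by simp only [mem_range, not_lt] at hk; omega)

theorem stmt_6_general (n₀ n₁ : ℕ) (h₀ : 0 < n₀) :
    maxRegions n₀ [n₁] 1 = ∑ i ∈ Finset.range (min n₀ n₁ + 1), n₁.choose i := by
  rw [sum_range_min_add_one_choose]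
  refine IsGreatest.csSup_eq ⟨exists_computes_numRegions_eq h₀ n₁, ?_⟩
  rintro k ⟨f, hf, rfl⟩
  obtain ⟨a, b, c, e, rfl⟩ := Computes.exists_eq_shallowNet hf
  simpa using numRegions_shallowNet_le a b c e

/-- `R(n₀, n₁, 1) = ∑_{i=0}^{min{n₀,n₁}} C(n₁, i)`. -/
theorem stmt_6 (n₀ n₁ : ℕ) (h₀ : 0 < n₀) (h₁ : 0 < n₁) :
    maxRegions n₀ [n₁] 1 = ∑ i ∈ Finset.range (min n₀ n₁ + 1), n₁.choose i :=
  stmt_6_general n₀ n₁ h₀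
end
end

section
/- For every L ≥ 1, every piecewise affine function f : ℝ → ℝ with at most L + 2 linear regions can be computed exactly by a ReLU network of design (1, 3, 3, …, 3, 1) with L hidden layers each of width 3. -/
open scoped BigOperators
open MeasureTheory

noncomputable section

lemma relu_nonneg (x : ℝ) : 0 ≤ relu x := le_max_right _ _

lemma relu_of_nonneg {x : ℝ} (h : 0 ≤ x) : relu x = x := max_eq_left h

lemma relu_of_nonpos {x : ℝ} (h : x ≤ 0) : relu x = 0 := max_eq_right h

lemma relu_sub_relu_neg (y : ℝ) : relu y - relu (-y) = y := by
  rcases le_total y 0 with h | h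
  · rw [relu_of_nonpos h, relu_of_nonneg (by linarith)]; ring
  · rw [relu_of_nonneg h, relu_of_nonpos (by linarith)]; ring

lemma relu_const_mul {k : ℝ} (hk : 0 ≤ k) (y : ℝ) : relu (k * y) = k * relu y := by
  rcases le_total y 0 with h | h
  · rw [relu_of_nonpos h, relu_of_nonpos (mul_nonpos_of_nonneg_of_nonpos hk h), mul_zero]
  · rw [relu_of_nonneg h, relu_of_nonneg (mul_nonneg hk h)]

lemma relu_sub_bound {a b : ℝ} (h : b ≤ a) :
    0 ≤ relu a - relu b ∧ relu a - relu b ≤ a - b := by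
  rcases le_total a 0 with ha | ha <;> rcases le_total b 0 with hb | hb
  · rw [relu_of_nonpos ha, relu_of_nonpos hb]; constructor <;> linarith
  · have hb0 : b = 0 := le_antisymm (le_trans h ha) hb
    have ha0 : a = 0 := le_antisymm ha (hb0 ▸ h)
    simp [ha0, hb0]
  · rw [relu_of_nonneg ha, relu_of_nonpos hb]; constructor <;> linarith
  · rw [relu_of_nonneg ha, relu_of_nonneg hb]; constructor <;> linarith

lemma affine_eq_of_eventually {a b a' b' x : ℝ}
    (h : ∀ᶠ y in nhds x, a * y + b = a' * y + b') : a = a' ∧ b = b' := by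
  obtain ⟨ε, hε, hball⟩ := Metric.eventually_nhds_iff.mp h
  have h1 : a * x + b = a' * x + b' := hball (by simp [hε])
  have h2 : a * (x + ε / 2) + b = a' * (x + ε / 2) + b' := by
    apply hball
    rw [Real.dist_eq]
    rw [show x + ε / 2 - x = ε / 2 by ring, abs_of_nonneg (by linarith)]
    linarith
  have ha : a = a' := by
    have h3 : a * (ε / 2) = a' * (ε / 2) := by linarith
    exact mul_right_cancel₀ (by positivity) h3
  exact ⟨ha, by rw [ha] at h1; linarith⟩

/-- On a preconnected set where `g` is locally affine, `g` is globally affine. -/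
lemma exists_affine_of_locally {I : Set ℝ} (hIp : IsPreconnected I) (hne : I.Nonempty)
    {g : ℝ → ℝ} (hloc : ∀ x ∈ I, ∃ a b : ℝ, ∀ᶠ y in nhds x, g y = a * y + b) :
    ∃ a b : ℝ, ∀ x ∈ I, g x = a * x + b := by
  obtain ⟨x₀, hx₀⟩ := hne
  obtain ⟨a, b, hab⟩ := hloc x₀ hx₀
  refine ⟨a, b, fun x hx => ?_⟩
  set S : Set ℝ := {z | ∀ᶠ y in nhds z, g y = a * y + b} with hS
  set V : Set ℝ := {z | ∃ a' b' : ℝ, (∀ᶠ y in nhds z, g y = a' * y + b') ∧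
      ¬(a' = a ∧ b' = b)} with hV
  have hSopen : IsOpen S := isOpen_setOf_eventually_nhds
  have hVopen : IsOpen V := by
    rw [isOpen_iff_mem_nhds]
    intro z hz
    obtain ⟨a', b', hz1, hz2⟩ := hz
    filter_upwards [hz1.eventually_nhds] with y hy
    exact ⟨a', b', hy, hz2⟩
  have hdisj : ∀ z, z ∈ S → z ∈ V → False := by
    intro z h1 ⟨a', b', h2, h3⟩
    have := affine_eq_of_eventually (a := a') (b := b') (a' := a) (b' := b) (x := z)
      (by filter_upwards [h1, h2] with y hy1 hy2; rw [← hy1, ← hy2])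
    exact h3 this
  have hsub : I ⊆ S ∪ V := by
    intro z hz
    obtain ⟨a', b', h⟩ := hloc z hz
    by_cases hc : a' = a ∧ b' = b
    · left; rw [hS]; obtain ⟨rfl, rfl⟩ := hc; exact h
    · right; exact ⟨a', b', h, hc⟩
  by_cases hxS : x ∈ S
  · exact hxS.self_of_nhds
  · exfalso
    have hxV : x ∈ V := (hsub hx).resolve_left hxS
    obtain ⟨y, hy⟩ := hIp S V hSopen hVopen hsub ⟨x₀, hx₀, hab⟩ ⟨x, hx, hxV⟩
    exact hdisj y hy.2.1 hy.2.2

lemma finite_of_no_three_chain {s : Set ℝ}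
    (h : ∀ x ∈ s, ∀ y ∈ s, ∀ z ∈ s, x < y → y < z → False) : s.Finite := by
  by_contra hinf
  obtain ⟨t, hts, hcard⟩ := Set.Infinite.exists_subset_card_eq hinf 3
  obtain ⟨x, y, z, hxy, hxz, hyz, rfl⟩ := Finset.card_eq_three.mp hcard
  have hx : x ∈ s := hts (by simp)
  have hy : y ∈ s := hts (by simp)
  have hz : z ∈ s := hts (by simp)
  rcases lt_trichotomy x y with h1 | h1 | h1
  · rcases lt_trichotomy y z with h2 | h2 | h2
    · exact h x hx y hy z hz h1 h2
    · exact hyz h2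
    · rcases lt_trichotomy x z with h3 | h3 | h3
      · exact h x hx z hz y hy h3 h2
      · exact hxz h3
      · exact h z hz x hx y hy h3 h1
  · exact hxy h1
  · rcases lt_trichotomy x z with h2 | h2 | h2
    · exact h y hy x hx z hz h1 h2
    · exact hxz h2
    · rcases lt_trichotomy y z with h3 | h3 | h3
      · exact h y hy z hz x hx h3 h2
      · exact hyz h3
      · exact h z hz y hy x hx h3 h1

lemma closure_diff_finite {R : Set ℝ} (hR : R.OrdConnected) : (closure R \ R).Finite := by
  apply finite_of_no_three_chain
  intro x hx y hy z hz hxy hyz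
  obtain ⟨x', hx'1, hx'2⟩ := (_root_.mem_closure_iff.mp hx.1) (Set.Iio y) isOpen_Iio hxy
  obtain ⟨z', hz'1, hz'2⟩ := (_root_.mem_closure_iff.mp hz.1) (Set.Ioi y) isOpen_Ioi hyz
  exact hy.2 (hR.out hx'2 hz'2 ⟨le_of_lt hx'1, le_of_lt hz'1⟩)

lemma repr_of_locallyAffine :
    ∀ (n : ℕ) (g : ℝ → ℝ) (u : Fin n → ℝ), Continuous g → StrictMono u →
    (∀ x : ℝ, x ∉ Set.range u → ∃ a b : ℝ, ∀ᶠ y in nhds x, g y = a * y + b) →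
    ∃ a b : ℝ, ∃ c : Fin n → ℝ, ∀ x : ℝ, g x = a * x + b + ∑ i, c i * relu (x - u i) := by
  intro n
  induction n with
  | zero =>
    intro g u hg hu hloc
    obtain ⟨a, b, h⟩ := exists_affine_of_locally isPreconnected_univ ⟨0, trivial⟩
      (fun x _ => hloc x (by simp))
    exact ⟨a, b, 0, fun x => by simpa using h x trivial⟩
  | succ n IH =>
    intro g u hg hu hloc
    set m := u (Fin.last n) with hm
    set u' : Fin n → ℝ := fun i => u i.castSucc with hu'def
    have hu'lt : ∀ i, u' i < m := fun i => hu (Fin.castSucc_lt_last i)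
    have hu'mono : StrictMono u' := fun i j hij => hu (Fin.castSucc_lt_castSucc_iff.mpr hij)
    have hrange : ∀ x : ℝ, (∀ i, x ≠ u' i) → x ≠ m → x ∉ Set.range u := by
      rintro x h1 h2 ⟨i, rfl⟩
      rcases Fin.eq_castSucc_or_eq_last i with ⟨j, rfl⟩ | rfl
      · exact h1 j rfl
      · exact h2 rfl
    -- the interval J just left of m
    set J : Set ℝ := {x | x < m ∧ ∀ i, u' i < x} with hJdef
    have hJopen : IsOpen J := by
      have : J = Set.Iio m ∩ ⋂ i, Set.Ioi (u' i) := by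
        ext x; simp [hJdef, Set.mem_iInter]
      rw [this]
      exact isOpen_Iio.inter (isOpen_iInter_of_finite fun i => isOpen_Ioi)
    have hJord : J.OrdConnected := by
      constructor
      rintro x hx z hz y hy
      exact ⟨lt_of_le_of_lt hy.2 hz.1, fun i => lt_of_lt_of_le (hx.2 i) hy.1⟩
    -- a point strictly below m dominating all u' i
    obtain ⟨y₀, hy₀m, hy₀u⟩ : ∃ y₀ : ℝ, y₀ < m ∧ ∀ i, u' i ≤ y₀ := by
      classical
      set P : Finset ℝ := insert (m - 1) (Finset.image u' Finset.univ) with hP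
      have hPne : P.Nonempty := ⟨m - 1, Finset.mem_insert_self _ _⟩
      refine ⟨P.max' hPne, ?_, ?_⟩
      · have hmm : P.max' hPne ∈ insert (m - 1) (Finset.image u' Finset.univ) := P.max'_mem hPne
        rcases Finset.mem_insert.mp hmm with h | h
        · linarith [h]
        · obtain ⟨i, _, hi⟩ := Finset.mem_image.mp h
          linarith [hu'lt i, hi]
      · intro i
        exact Finset.le_max' _ _ (Finset.mem_insert_of_mem
          (Finset.mem_image_of_mem u' (Finset.mem_univ i)))
    have hIooJ : Set.Ioo y₀ m ⊆ J := fun x hx =>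
      ⟨hx.2, fun i => lt_of_le_of_lt (hy₀u i) hx.1⟩
    have hJne : J.Nonempty := ⟨(y₀ + m) / 2, hIooJ ⟨by linarith, by linarith⟩⟩
    -- g is affine on J
    obtain ⟨α, β, hαβ⟩ := exists_affine_of_locally (hJord.isPreconnected) hJne
      (fun x hx => hloc x (hrange x (fun i => ne_of_gt (hx.2 i)) (ne_of_lt hx.1)))
    -- value at m by continuity
    have hgm : g m = α * m + β := by
      have hmcl : m ∈ closure J := by
        apply closure_mono hIooJ
        rw [closure_Ioo (ne_of_lt hy₀m)]
        exact ⟨le_of_lt hy₀m, le_refl m⟩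
      have := Set.EqOn.closure (fun x hx => hαβ x hx) hg (by fun_prop)
      exact this hmcl
    -- g is affine on Ioi m
    obtain ⟨α', β', hαβ'⟩ := exists_affine_of_locally isPreconnected_Ioi ⟨m + 1, by simp⟩
      (fun x hx => hloc x (hrange x
        (fun i => ne_of_gt (lt_trans (hu'lt i) hx)) (ne_of_gt hx)))
    have hgm' : g m = α' * m + β' := by
      have hmcl : m ∈ closure (Set.Ioi m) := by rw [closure_Ioi]; exact le_refl m
      exact Set.EqOn.closure (fun x hx => hαβ' x hx) hg (by fun_prop) hmcl
    -- the truncated function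
    set G : ℝ → ℝ := fun x => if x ≤ m then g x else α * x + β with hGdef
    have hGcont : Continuous G := by
      apply Continuous.if_le hg (by fun_prop) continuous_id continuous_const
      intro x hx; simp only [id_eq] at hx; rw [hx]; exact hgm
    have hGloc : ∀ x : ℝ, x ∉ Set.range u' → ∃ a b : ℝ, ∀ᶠ y in nhds x, G y = a * y + b := by
      intro x hx
      rcases lt_trichotomy x m with h | h | h
      · obtain ⟨a₁, b₁, h₁⟩ := hloc x (hrange x
          (fun i hi => hx ⟨i, hi.symm⟩) (ne_of_lt h))
        refine ⟨a₁, b₁, ?_⟩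
        filter_upwards [h₁, Iio_mem_nhds h] with y hy hym
        show (if y ≤ m then g y else α * y + β) = a₁ * y + b₁
        rw [if_pos (le_of_lt (Set.mem_Iio.mp hym))]; exact hy
      · refine ⟨α, β, ?_⟩
        have : y₀ < x := h ▸ hy₀m
        filter_upwards [Ioi_mem_nhds this] with z hz
        show (if z ≤ m then g z else α * z + β) = α * z + β
        by_cases hzm : z ≤ m
        · rcases eq_or_lt_of_le hzm with heq | hzm'
          · rw [if_pos hzm, heq]; exact hgm
          · rw [if_pos hzm]; exact hαβ z (hIooJ ⟨hz, hzm'⟩)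
        · rw [if_neg hzm]
      · refine ⟨α, β, ?_⟩
        filter_upwards [Ioi_mem_nhds h] with z hz
        show (if z ≤ m then g z else α * z + β) = α * z + β
        rw [if_neg (not_le.mpr (Set.mem_Ioi.mp hz))]
    obtain ⟨a, b, c', hc'⟩ := IH G u' hGcont hu'mono hGloc
    refine ⟨a, b, Fin.snoc c' (α' - α), fun x => ?_⟩
    rw [Fin.sum_univ_castSucc]
    simp only [Fin.snoc_castSucc, Fin.snoc_last]
    have hsum : ∀ y : ℝ, ∑ i : Fin n, c' i * relu (y - u i.castSucc)
        = ∑ i : Fin n, c' i * relu (y - u' i) := by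
      intro y; apply Finset.sum_congr rfl; intro i _; rw [hu'def]
    rw [hsum]
    by_cases hx : x ≤ m
    · have h1 : G x = g x := if_pos hx
      have h2 : relu (x - m) = 0 := relu_of_nonpos (by linarith)
      rw [← h1, hc' x, ← hm, h2]; ring
    · push_neg at hx
      have h1 : g x = α' * x + β' := hαβ' x hx
      have h2 : G x = α * x + β := if_neg (not_le.mpr hx)
      have h3 : a * x + b + ∑ i : Fin n, c' i * relu (x - u' i) = α * x + β := by
        rw [← h2, hc' x]
      have h4 : relu (x - m) = x - m := relu_of_nonneg (by linarith)
      rw [h1, ← hm, h4]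
      linear_combination (-1 : ℝ) * h3 + hgm - hgm'


-- network construction gadgets
def Gsum (t c : ℕ → ℝ) (j : ℕ) (x : ℝ) : ℝ := ∑ i ∈ Finset.range (j+1), c i * relu (x - t i)
def Ssum (c : ℕ → ℝ) (j : ℕ) : ℝ := ∑ i ∈ Finset.range (j+1), c i
def eps (c : ℕ → ℝ) (j : ℕ) : ℝ := if 0 ≤ Ssum c j then 1 else -1
def Cc (t c : ℕ → ℝ) (j : ℕ) : ℝ := ∑ i ∈ Finset.range (j+1), |c i| * (t j - t i)
def Fj (t c : ℕ → ℝ) (j : ℕ) (x : ℝ) : ℝ := eps c j * Gsum t c j x + Cc t c j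

lemma eps_mul_S (c : ℕ → ℝ) (j : ℕ) : eps c j * Ssum c j = |Ssum c j| := by
  unfold eps; split
  · rw [one_mul, abs_of_nonneg ‹_›]
  · rw [neg_one_mul, abs_of_neg (lt_of_not_ge ‹_›)]

lemma eps_sq (c : ℕ → ℝ) (j : ℕ) : eps c j * eps c j = 1 := by
  unfold eps; split <;> norm_num

lemma abs_eps (c : ℕ → ℝ) (j : ℕ) : |eps c j| = 1 := by
  unfold eps; split <;> norm_num

lemma Fj_nonneg (t c : ℕ → ℝ) (ht : Monotone t) (j : ℕ) (x : ℝ) : 0 ≤ Fj t c j x := by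
  have key : ∀ i ∈ Finset.range (j+1),
      (eps c j * c i) * relu (x - t j) ≤
        eps c j * (c i * relu (x - t i)) + |c i| * (t j - t i) := by
    intro i hi
    have hij : t i ≤ t j := ht (Finset.mem_range_succ_iff.mp hi)
    have hd := relu_sub_bound (show x - t j ≤ x - t i by linarith)
    set d : ℝ := relu (x - t i) - relu (x - t j) with hdd
    have habs : |eps c j * c i| = |c i| := by rw [abs_mul, abs_eps, one_mul]
    have h1 : -(|c i| * (t j - t i)) ≤ (eps c j * c i) * d := by
      have e1 : -|(eps c j * c i) * d| ≤ (eps c j * c i) * d := neg_abs_le _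
      have e2 : |(eps c j * c i) * d| = |c i| * d := by
        rw [abs_mul, habs, abs_of_nonneg hd.1]
      have e3 : |c i| * d ≤ |c i| * (t j - t i) :=
        mul_le_mul_of_nonneg_left (by linarith [hd.2]) (abs_nonneg _)
      linarith
    have e4 : eps c j * (c i * relu (x - t i))
        = (eps c j * c i) * relu (x - t j) + (eps c j * c i) * d := by
      rw [hdd]; ring
    linarith
  have hF : Fj t c j x = ∑ i ∈ Finset.range (j+1),
      (eps c j * (c i * relu (x - t i)) + |c i| * (t j - t i)) := by
    unfold Fj Gsum Cc; rw [Finset.mul_sum, ← Finset.sum_add_distrib]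
  have hsum := Finset.sum_le_sum key
  have hR : ∑ i ∈ Finset.range (j+1), (eps c j * c i) * relu (x - t j)
      = |Ssum c j| * relu (x - t j) := by
    rw [← Finset.sum_mul, ← eps_mul_S c j]
    congr 1
    rw [← Finset.mul_sum]; rfl
  rw [hF]
  calc (0:ℝ) ≤ |Ssum c j| * relu (x - t j) := mul_nonneg (abs_nonneg _) (relu_nonneg _)
    _ = ∑ i ∈ Finset.range (j+1), (eps c j * c i) * relu (x - t j) := hR.symm
    _ ≤ _ := hsum

lemma net_lemma (t c : ℕ → ℝ) (ht : Monotone t) (a b : ℝ) :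
    ∀ n j : ℕ, ∃ h : (Fin 3 → ℝ) → Fin 1 → ℝ,
      ComputesA relu 3 (List.replicate n 3) 1 h ∧
      ∀ x : ℝ, h ![relu (x - t (j+1)), relu (t (j+1) - x), Fj t c j x]
        = fun _ => a * x + b + Gsum t c (j+1+n) x := by
  intro n
  induction n with
  | zero =>
    intro j
    refine ⟨fun v _ => (a + c (j+1)) * v 0 + (-a) * v 1 + eps c j * v 2
        + (a * t (j+1) + b - eps c j * Cc t c j), ?_, ?_⟩
    · refine ComputesA.nil _ ⟨Matrix.of ![![a + c (j+1), -a, eps c j]],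
        ![a * t (j+1) + b - eps c j * Cc t c j], ?_⟩
      intro x i
      fin_cases i
      simp [Fin.sum_univ_three, Matrix.of_apply]
    · intro x
      funext i
      simp only [Matrix.cons_val_zero, Matrix.cons_val_one, Matrix.head_cons,
        Matrix.cons_val_two, Matrix.tail_cons]
      have hxy : relu (x - t (j+1)) - relu (t (j+1) - x) = x - t (j+1) := by
        have := relu_sub_relu_neg (x - t (j+1))
        rw [neg_sub] at this; exact this
      have h2 : eps c j * Fj t c j x = Gsum t c j x + eps c j * Cc t c j := by
        unfold Fj; rw [mul_add, ← mul_assoc, eps_sq c j, one_mul]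
      have h3 : Gsum t c (j+1+0) x = Gsum t c j x + c (j+1) * relu (x - t (j+1)) := by
        show Gsum t c (j+1) x = _
        unfold Gsum; rw [Finset.sum_range_succ]
      rw [h3]
      linear_combination a * hxy + h2
  | succ n IH =>
    intro j
    obtain ⟨h', hcomp', heq'⟩ := IH (j+1)
    set A : (Fin 3 → ℝ) → Fin 3 → ℝ := fun v =>
      ![v 0 - v 1 + (t (j+1) - t (j+2)),
        (t (j+2) - t (j+1)) - v 0 + v 1,
        (eps c (j+1) * eps c j) * v 2 + (eps c (j+1) * c (j+1)) * v 0
          + (Cc t c (j+1) - eps c (j+1) * eps c j * Cc t c j)] with hA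
    have hAaff : IsAffineMap A := by
      refine ⟨Matrix.of ![![1, -1, 0], ![-1, 1, 0],
        ![eps c (j+1) * c (j+1), 0, eps c (j+1) * eps c j]],
        ![t (j+1) - t (j+2), t (j+2) - t (j+1),
          Cc t c (j+1) - eps c (j+1) * eps c j * Cc t c j], ?_⟩
      intro x i
      fin_cases i <;>
        simp [hA, Fin.sum_univ_three, Matrix.of_apply] <;> ring
    refine ⟨fun v => h' (fun i => relu (A v i)), ?_, ?_⟩
    · have hrep : List.replicate (n+1) 3 = 3 :: List.replicate n 3 := rfl
      rw [hrep]
      exact ComputesA.cons A h' hAaff hcomp'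
    · intro x
      have hxy : relu (x - t (j+1)) - relu (t (j+1) - x) = x - t (j+1) := by
        have := relu_sub_relu_neg (x - t (j+1))
        rw [neg_sub] at this; exact this
      have hstate : (fun i => relu (A ![relu (x - t (j+1)), relu (t (j+1) - x), Fj t c j x] i))
          = ![relu (x - t (j+2)), relu (t (j+2) - x), Fj t c (j+1) x] := by
        funext i
        fin_cases i
        · show relu (relu (x - t (j+1)) - relu (t (j+1) - x) + (t (j+1) - t (j+2)))
            = relu (x - t (j+2))
          congr 1; linarith
        · show relu ((t (j+2) - t (j+1)) - relu (x - t (j+1)) + relu (t (j+1) - x))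
            = relu (t (j+2) - x)
          congr 1; linarith
        · show relu ((eps c (j+1) * eps c j) * Fj t c j x
              + (eps c (j+1) * c (j+1)) * relu (x - t (j+1))
              + (Cc t c (j+1) - eps c (j+1) * eps c j * Cc t c j)) = Fj t c (j+1) x
          have harg : (eps c (j+1) * eps c j) * Fj t c j x
              + (eps c (j+1) * c (j+1)) * relu (x - t (j+1))
              + (Cc t c (j+1) - eps c (j+1) * eps c j * Cc t c j) = Fj t c (j+1) x := by
            have hG : Gsum t c (j+1) x = Gsum t c j x + c (j+1) * relu (x - t (j+1)) := by
              unfold Gsum; rw [Finset.sum_range_succ]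
            have hsq := eps_sq c j
            unfold Fj
            rw [hG]
            linear_combination (eps c (j+1) * Gsum t c j x) * hsq
          rw [harg]
          exact relu_of_nonneg (Fj_nonneg t c ht (j+1) x)
      show h' (fun i => relu (A ![relu (x - t (j+1)), relu (t (j+1) - x), Fj t c j x] i))
        = fun _ => a * x + b + Gsum t c (j+1+(n+1)) x
      rw [hstate, heq' x]
      have hidx : j + 1 + 1 + n = j + 1 + (n + 1) := by omega
      rw [hidx]


lemma extract (f : (Fin 1 → ℝ) → Fin 1 → ℝ) (hf : IsPiecewiseAffine f) :
    ∃ (n : ℕ) (u : Fin n → ℝ) (a b : ℝ) (c : Fin n → ℝ),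
      n + 1 ≤ numRegions f ∧ StrictMono u ∧
      ∀ x : ℝ, f (fun _ => x) 0 = a * x + b + ∑ i, c i * relu (x - u i) := by
  classical
  obtain ⟨hcont, hfin, hcover⟩ := hf
  set ι : ℝ → (Fin 1 → ℝ) := fun s _ => s with hι
  have hιcont : Continuous ι := continuous_pi fun _ => continuous_id
  set g : ℝ → ℝ := fun s => f (ι s) 0 with hgdef
  have hgcont : Continuous g := ((continuous_apply (0 : Fin 1)).comp hcont).comp hιcont
  have hcompat : ∀ x : Fin 1 → ℝ, ι (x 0) = x := fun x =>
    funext fun j => congrArg x (Subsingleton.elim 0 j)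
  have hregion : ∀ R, IsLinearRegion f R →
      IsOpen (ι ⁻¹' R) ∧ (ι ⁻¹' R).OrdConnected ∧
      (ι ⁻¹' R) = (fun x : Fin 1 → ℝ => x 0) '' R ∧
      ∃ a b : ℝ, ∀ s ∈ ι ⁻¹' R, g s = a * s + b := by
    intro R hR
    obtain ⟨hRo, hRc, ⟨gaff, ⟨A, B, hAB⟩, heqn⟩, -⟩ := hR
    have himg : (ι ⁻¹' R) = (fun x : Fin 1 → ℝ => x 0) '' R := by
      ext s
      constructor
      · intro hs; exact ⟨ι s, hs, rfl⟩
      · rintro ⟨x, hx, rfl⟩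
        show ι (x 0) ∈ R
        rw [hcompat x]; exact hx
    refine ⟨hRo.preimage hιcont, ?_, himg, A 0 0, B 0, ?_⟩
    · rw [himg]
      exact (hRc.isPreconnected.image _
        (continuous_apply (0 : Fin 1)).continuousOn).ordConnected
    · intro s hs
      have h1 : f (ι s) = gaff (ι s) := heqn hs
      have h2 := hAB (ι s) 0
      rw [Fin.sum_univ_one] at h2
      show f (ι s) 0 = _
      rw [h1, h2]
  set T : Set ℝ := {s : ℝ | ∀ R, IsLinearRegion f R → ι s ∉ R} with hT
  have hTfin : T.Finite := by
    apply Set.Finite.subset (Set.Finite.biUnion hfin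
      (fun R hR => closure_diff_finite (hregion R hR).2.1))
    intro s hs
    have h1 : ι s ∈ Set.univ := trivial
    rw [← hcover] at h1
    simp only [Set.mem_iUnion, Set.mem_setOf_eq] at h1
    obtain ⟨R, hR, hclos⟩ := h1
    refine Set.mem_biUnion hR ⟨?_, hs R hR⟩
    have h2 : ((fun x : Fin 1 → ℝ => x 0) '' closure R)
        ⊆ closure ((fun x : Fin 1 → ℝ => x 0) '' R) :=
      image_closure_subset_closure_image (continuous_apply (0 : Fin 1))
    have h4 := h2 ⟨ι s, hclos, rfl⟩
    rw [← (hregion R hR).2.2.1] at h4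
    exact h4
  obtain ⟨nB, u, humono, hurange⟩ :
      ∃ (n : ℕ) (u : Fin n → ℝ), StrictMono u ∧ Set.range u = T := by
    refine ⟨hTfin.toFinset.card, fun i => (hTfin.toFinset.orderIsoOfFin rfl i : ℝ), ?_, ?_⟩
    · intro i j hij
      exact Subtype.coe_lt_coe.mpr ((hTfin.toFinset.orderIsoOfFin rfl).strictMono hij)
    · ext s
      simp only [Set.mem_range]
      constructor
      · rintro ⟨i, rfl⟩
        have := (hTfin.toFinset.orderIsoOfFin rfl i).2
        rwa [Set.Finite.mem_toFinset] at this
      · intro hsT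
        have hmem : s ∈ hTfin.toFinset := hTfin.mem_toFinset.mpr hsT
        exact ⟨(hTfin.toFinset.orderIsoOfFin rfl).symm ⟨s, hmem⟩, by
          rw [OrderIso.apply_symm_apply]⟩
  have hloc : ∀ x : ℝ, x ∉ Set.range u → ∃ a b : ℝ, ∀ᶠ y in nhds x, g y = a * y + b := by
    intro x hx
    rw [hurange, hT] at hx
    simp only [Set.mem_setOf_eq] at hx
    push_neg at hx
    obtain ⟨R, hR, hxR⟩ := hx
    obtain ⟨hRo', _, _, aR, bR, haff⟩ := hregion R hR
    exact ⟨aR, bR, Filter.eventually_of_mem (hRo'.mem_nhds hxR) haff⟩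
  have hcount : nB + 1 ≤ numRegions f := by
    set uu : ℕ → ℝ := fun i => if h : i < nB then u ⟨i, h⟩ else 0 with huu
    have huuu : ∀ (i : ℕ) (h : i < nB), uu i = u ⟨i, h⟩ := fun i h => dif_pos h
    have huumono : ∀ i j : ℕ, i < j → j < nB → uu i < uu j := by
      intro i j hij hj
      rw [huuu i (by omega), huuu j hj]
      exact humono (by simp [Fin.lt_def]; omega)
    have huumono' : ∀ i j : ℕ, i ≤ j → j < nB → uu i ≤ uu j := by
      intro i j hij hj
      rcases eq_or_lt_of_le hij with rfl | h
      · exact le_refl _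
      · exact le_of_lt (huumono i j h hj)
    set w : Fin (nB+1) → ℝ := fun k => if (k:ℕ) < nB then
        (if 0 < (k:ℕ) then (uu ((k:ℕ)-1) + uu (k:ℕ))/2 else uu 0 - 1)
      else (if 0 < nB then uu (nB-1) + 1 else 0) with hw
    have hwi : ∀ k : Fin (nB+1), (k:ℕ) < nB → w k < uu (k:ℕ) := by
      intro k hk
      show (if (k:ℕ) < nB then _ else _) < uu (k:ℕ)
      rw [if_pos hk]
      by_cases h0 : 0 < (k:ℕ)
      · rw [if_pos h0]
        have := huumono ((k:ℕ)-1) (k:ℕ) (by omega) hk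
        linarith
      · rw [if_neg h0]
        have hk0 : (k:ℕ) = 0 := by omega
        rw [hk0]; linarith
    have hwii : ∀ (k : Fin (nB+1)) (j : ℕ), j < (k:ℕ) → j < nB → uu j < w k := by
      intro k j hjk hj
      show uu j < (if (k:ℕ) < nB then _ else _)
      by_cases h : (k:ℕ) < nB
      · rw [if_pos h, if_pos (by omega : 0 < (k:ℕ))]
        have h1 : uu j ≤ uu ((k:ℕ)-1) := huumono' j ((k:ℕ)-1) (by omega) (by omega)
        have h2 : uu ((k:ℕ)-1) < uu (k:ℕ) := huumono _ _ (by omega) h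
        linarith
      · rw [if_neg h, if_pos (by omega : 0 < nB)]
        have h1 : uu j ≤ uu (nB-1) := huumono' j (nB-1) (by omega) (by omega)
        linarith
    have hwT : ∀ k : Fin (nB+1), w k ∉ T := by
      intro k hkT
      rw [← hurange] at hkT
      obtain ⟨j, hj⟩ := hkT
      have hj' : uu (j:ℕ) = w k := by rw [huuu _ j.isLt, Fin.eta]; exact hj
      rcases lt_or_ge (j:ℕ) (k:ℕ) with hc | hc
      · have := hwii k (j:ℕ) hc j.isLt
        rw [hj'] at this; exact lt_irrefl _ this
      · have hkn : (k:ℕ) < nB := lt_of_le_of_lt hc j.isLt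
        have h1 := hwi k hkn
        have h2 : uu (k:ℕ) ≤ uu (j:ℕ) := huumono' _ _ hc j.isLt
        rw [hj'] at h2
        exact lt_irrefl _ (lt_of_lt_of_le h1 h2)
    have hchoice : ∀ k : Fin (nB+1), ∃ R, IsLinearRegion f R ∧ ι (w k) ∈ R := by
      intro k
      by_contra h
      push_neg at h
      exact hwT k (fun R hR => h R hR)
    choose χ hχ1 hχ2 using hchoice
    have key : ∀ k k' : Fin (nB+1), k < k' → χ k = χ k' → False := by
      intro k k' hlt heq
      have hkn : (k:ℕ) < nB := by
        have h1 := k'.isLt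
        have h2 := Fin.lt_def.mp hlt
        omega
      have hOC := (hregion _ (hχ1 k)).2.1
      have hwk : w k ∈ ι ⁻¹' (χ k) := hχ2 k
      have hwk' : w k' ∈ ι ⁻¹' (χ k) := by rw [heq]; exact hχ2 k'
      have hmem : uu (k:ℕ) ∈ ι ⁻¹' (χ k) := hOC.out hwk hwk'
        ⟨le_of_lt (hwi k hkn), le_of_lt (hwii k' (k:ℕ) (Fin.lt_def.mp hlt) hkn)⟩
      have huT : uu (k:ℕ) ∈ T := by
        rw [← hurange]
        exact ⟨⟨(k:ℕ), hkn⟩, (huuu _ hkn).symm⟩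
      exact huT _ (hχ1 k) hmem
    have hinj : Function.Injective χ := by
      intro k k' h
      by_contra hne
      rcases lt_or_gt_of_ne hne with hlt | hlt
      · exact key k k' hlt h
      · exact key k' k hlt h.symm
    have : Finite ({R | IsLinearRegion f R} : Set _) := hfin.to_subtype
    have hcard : Nat.card (Fin (nB+1)) ≤ Nat.card {R | IsLinearRegion f R} :=
      Nat.card_le_card_of_injective
        (fun k => (⟨χ k, hχ1 k⟩ : {R | IsLinearRegion f R}))
        (fun k k' hkk => hinj (congrArg Subtype.val hkk))
    simpa [Nat.card_eq_fintype_card, Nat.card_coe_set_eq, numRegions] using hcard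
  obtain ⟨a, b, c, hrepr⟩ := repr_of_locallyAffine nB g u hgcont humono hloc
  exact ⟨nB, u, a, b, c, hcount, humono, fun x => hrepr x⟩

/-- every piecewise affine `f : ℝ → ℝ` with at most `L + 2` linear regions is
computed by a ReLU network with `L` hidden layers of width 3. -/
theorem stmt_8 (L : ℕ) (hL : 1 ≤ L) (f : (Fin 1 → ℝ) → Fin 1 → ℝ)
    (hf : IsPiecewiseAffine f) (hreg : numRegions f ≤ L + 2) :
    Computes 1 (List.replicate L 3) 1 f := by
  classical
  obtain ⟨nB, u, a, b, c0, hcount, humono, hrepr⟩ := extract f hf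
  have hnB : nB ≤ L + 1 := by omega
  set t : ℕ → ℝ := fun i => if h : i < nB then u ⟨i, h⟩ else
    (if h0 : 0 < nB then u ⟨nB - 1, by omega⟩ else 0) with htdef
  set c : ℕ → ℝ := fun i => if h : i < nB then c0 ⟨i, h⟩ else 0 with hcdef
  have ht : Monotone t := by
    intro i j hij
    simp only [htdef]
    by_cases hi : i < nB
    · by_cases hj : j < nB
      · rw [dif_pos hi, dif_pos hj]
        exact humono.monotone (by simp only [Fin.mk_le_mk]; omega)
      · rw [dif_pos hi, dif_neg hj, dif_pos (show 0 < nB by omega)]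
        exact humono.monotone (by simp only [Fin.mk_le_mk]; omega)
    · have hj : ¬ j < nB := by omega
      rw [dif_neg hi, dif_neg hj]
  have hrepr' : ∀ x : ℝ, f (fun _ => x) 0 = a * x + b + Gsum t c L x := by
    intro x
    rw [hrepr x]
    congr 1
    have h1 : ∀ i : Fin nB, c0 i * relu (x - u i) = c (i : ℕ) * relu (x - t (i : ℕ)) := by
      intro i
      have e1 : c (i : ℕ) = c0 i := by rw [hcdef]; simp [i.isLt]
      have e2 : t (i : ℕ) = u i := by rw [htdef]; simp [i.isLt]
      rw [e1, e2]
    rw [Finset.sum_congr rfl (fun i _ => h1 i),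
      Fin.sum_univ_eq_sum_range (fun k => c k * relu (x - t k)) nB]
    unfold Gsum
    apply Finset.sum_subset
    · intro i hi
      rw [Finset.mem_range] at *
      omega
    · intro i _ hn
      rw [Finset.mem_range] at hn
      have hni : ¬ i < nB := hn
      rw [hcdef]
      simp only [dif_neg hni, zero_mul]
  obtain ⟨h, hcomp, heq⟩ := net_lemma t c ht a b (L - 1) 0
  have hidx : 0 + 1 + (L - 1) = L := by omega
  rw [hidx] at heq
  simp only [Nat.zero_add] at heq
  set A₀ : (Fin 1 → ℝ) → Fin 3 → ℝ := fun x =>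
    ![x 0 - t 1, t 1 - x 0, (eps c 0 * c 0) * (x 0 - t 0)] with hA₀def
  have hA₀ : IsAffineMap A₀ := by
    refine ⟨Matrix.of ![![1], ![-1], ![eps c 0 * c 0]],
      ![-(t 1), t 1, -(eps c 0 * c 0 * t 0)], ?_⟩
    intro x i
    fin_cases i <;> simp [hA₀def, Fin.sum_univ_one, Matrix.of_apply] <;> ring
  have hstate : ∀ x : Fin 1 → ℝ, (fun i => relu (A₀ x i))
      = ![relu (x 0 - t 1), relu (t 1 - x 0), Fj t c 0 (x 0)] := by
    intro x
    funext i
    fin_cases i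
    · rfl
    · rfl
    · show relu (eps c 0 * c 0 * (x 0 - t 0)) = Fj t c 0 (x 0)
      have hS0 : Ssum c 0 = c 0 := by unfold Ssum; simp
      have hepsc : eps c 0 * c 0 = |c 0| := by
        unfold eps; rw [hS0]; split
        · rw [one_mul, abs_of_nonneg ‹_›]
        · rw [neg_one_mul, abs_of_neg (lt_of_not_ge ‹_›)]
      have hC0 : Cc t c 0 = 0 := by unfold Cc; simp
      have hG0 : Gsum t c 0 (x 0) = c 0 * relu (x 0 - t 0) := by unfold Gsum; simp
      rw [hepsc, relu_const_mul (abs_nonneg _)]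
      unfold Fj
      rw [hC0, hG0, ← hepsc]
      ring
  have hff : f = fun x => h (fun i => relu (A₀ x i)) := by
    funext x i
    show f x i = h (fun k => relu (A₀ x k)) i
    rw [hstate x, heq (x 0)]
    have hi : i = 0 := Subsingleton.elim i 0
    have hx : (fun _ : Fin 1 => x 0) = x := funext fun j => congrArg x (Subsingleton.elim 0 j)
    show f x i = (fun _ : Fin 1 => a * (x 0) + b + Gsum t c L (x 0)) i
    have hx0 : f x i = f (fun _ => x 0) 0 := by rw [hi, hx]
    rw [hx0, hrepr' (x 0)]
  show ComputesA relu 1 (List.replicate L 3) 1 f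
  rw [hff]
  have hrep3 : List.replicate L 3 = 3 :: List.replicate (L - 1) 3 := by
    conv_lhs => rw [show L = (L - 1) + 1 by omega, List.replicate_succ]
  rw [hrep3]
  exact ComputesA.cons A₀ h hA₀ hcomp
end
end
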